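/- arXiv:0711.1229 — 7 statements merged into one kernel-verified Lean document; each statement's English description precedes it below -/
import Mathlib

section
/- There exists a fine subset of S². (For example, replacing each vertex of a regular inscribed tetrahedron by a generic triple of nearby points yields a fine set of 12 points.) -/
open scoped RealInnerProductSpace
open Real

noncomputable section

/-- Euclidean 3-space. -/
abbrev E3 : Type := EuclideanSpace ℝ (Fin 3)

/-- The unit sphere S² in ℝ³. -/
def sphere2 : Set E3 := {x : E3 | ‖x‖ = 1}

/-- The round (geodesic) distance ρ(p,q) = arccos⟨p,q⟩ on S². -/
def rho (p q : E3) : ℝ := Real.arccos ⟪p, q⟫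

/-- `UnitTangent p v` : `v` is a unit tangent vector at `p`. -/
def UnitTangent (p v : E3) : Prop := ‖v‖ = 1 ∧ ⟪p, v⟫ = 0

/-- The unit-speed great-circle arc γ_{p,v}(t) = (cos t)·p + (sin t)·v. -/
def geo (p v : E3) (t : ℝ) : E3 := (Real.cos t) • p + (Real.sin t) • v
open Pointwise

/-- A great circle: the intersection of S² with a two-dimensional linear
subspace of ℝ³. -/
def GreatCircle (C : Set E3) : Prop :=
  ∃ P : Submodule ℝ E3, Module.finrank ℝ P = 2 ∧ C = sphere2 ∩ (P : Set E3)

/-- A finite subset `S` of the sphere is *fine* if (1) no three distinct points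
of `S` lie on a common great circle, (2) whenever three pairwise distinct great
circles, each through two distinct points of `S`, share a common point `x` of
the sphere, then `x ∈ S ∪ (-S)`, and (3) every open hemisphere contains at
least 3 points of `S`. -/
def Fine (S : Set E3) : Prop :=
  S.Finite ∧ S ⊆ sphere2 ∧
  (∀ x ∈ S, ∀ y ∈ S, ∀ z ∈ S, x ≠ y → y ≠ z → x ≠ z →
    ∀ C : Set E3, GreatCircle C → x ∈ C → y ∈ C → z ∈ C → False) ∧
  (∀ C₁ C₂ C₃ : Set E3, GreatCircle C₁ → GreatCircle C₂ → GreatCircle C₃ →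
    C₁ ≠ C₂ → C₂ ≠ C₃ → C₁ ≠ C₃ →
    (∃ a ∈ S, ∃ b ∈ S, a ≠ b ∧ a ∈ C₁ ∧ b ∈ C₁) →
    (∃ a ∈ S, ∃ b ∈ S, a ≠ b ∧ a ∈ C₂ ∧ b ∈ C₂) →
    (∃ a ∈ S, ∃ b ∈ S, a ≠ b ∧ a ∈ C₃ ∧ b ∈ C₃) →
    ∀ x ∈ sphere2, x ∈ C₁ → x ∈ C₂ → x ∈ C₃ → x ∈ S ∪ (-S)) ∧
  (∀ n ∈ sphere2, 3 ≤ {x ∈ S | 0 < ⟪x, n⟫}.ncard)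

/-!
A finite set `T` of unit vectors is in general position if no point of `T` lies in the span of
two others (or of one other) and three distinct planes spanned by pairs of points of `T` meet on
the sphere only in `T ∪ -T`. A new unit vector `p` keeps `T` in general position as soon as it
avoids the finitely many subspaces `span {a, b}` and `(P ⊓ Q) ⊔ span {a}` for `a, b ∈ T` and
distinct planes `P, Q` of `T`: three planes through a new point `x` either include two through
`p`, which meet only in `±p`, or one plane `span {p, a}` and two old ones, and then `x = ±a`
since otherwise `p ∈ span {x, a} ≤ (P ⊓ Q) ⊔ span {a}`. All these subspaces are proper, so their
union misses a point of every ball and `p` can be chosen as close as we like to any unit vector.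

Perturbing each vertex `±eᵢ` of the octahedron into three points at distance `< 1/2` gives a fine
set: every unit `n` has some `|nᵢ| > 1/2`, so some vertex `v` has `⟪v, n⟫ > 1/2` and the three
points near `v` lie in the hemisphere of `n`.
-/

open Module Submodule

section LinearAlgebra

variable {K V : Type*} [Field K] [AddCommGroup V] [Module K V] [FiniteDimensional K V]

theorem span_pair_eq_of_finrank_eq_two {P : Submodule K V} (hP : finrank K P = 2) {x a : V}
    (hx : x ∈ P) (ha : a ∈ P) (ha0 : a ≠ 0) (hxa : x ∉ span K {a}) : span K {x, a} = P := by
  have hind : LinearIndependent K ![x, a] :=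
    linearIndependent_fin2.mpr ⟨ha0, fun c h => hxa (mem_span_singleton.mpr ⟨c, h⟩)⟩
  refine eq_of_le_of_finrank_le (span_le.mpr (Set.insert_subset hx (by simpa using ha))) ?_
  rw [hP, ← Matrix.range_cons_cons_empty x a ![], finrank_span_eq_card hind, Fintype.card_fin]

theorem mem_span_singleton_of_mem_inf {P Q : Submodule K V} (hP : finrank K P = 2)
    (hQ : finrank K Q = 2) (hPQ : P ≠ Q) {p x : V} (hp0 : p ≠ 0) (hpP : p ∈ P) (hpQ : p ∈ Q)
    (hxP : x ∈ P) (hxQ : x ∈ Q) : x ∈ span K {p} := by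
  by_contra hx
  exact hPQ ((span_pair_eq_of_finrank_eq_two hP hxP hpP hp0 hx).symm.trans
    (span_pair_eq_of_finrank_eq_two hQ hxQ hpQ hp0 hx))

theorem finrank_inf_le_one {P Q : Submodule K V} (hP : finrank K P = 2) (hQ : finrank K Q = 2)
    (hPQ : P ≠ Q) : finrank K ↥(P ⊓ Q) ≤ 1 := by
  have hlt : P ⊓ Q < P := inf_le_left.lt_of_ne fun h =>
    hPQ (eq_of_le_of_finrank_eq (h ▸ inf_le_right) (hP.trans hQ.symm))
  have := finrank_lt_finrank_of_lt hlt
  omega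

end LinearAlgebra

section Normed

variable {V : Type*} [NormedAddCommGroup V] [NormedSpace ℝ V]

theorem eq_or_eq_neg_of_mem_span_singleton {x a : V} (hx : ‖x‖ = 1) (ha : ‖a‖ = 1)
    (h : x ∈ span ℝ {a}) : x = a ∨ x = -a := by
  obtain ⟨c, rfl⟩ := mem_span_singleton.mp h
  rw [norm_smul, ha, mul_one, Real.norm_eq_abs] at hx
  rcases abs_eq zero_le_one |>.mp hx with rfl | rfl
  · exact Or.inl (one_smul ℝ a)
  · exact Or.inr (neg_one_smul ℝ a)

theorem norm_inv_norm_smul_sub_le {y q : V} (hq : ‖q‖ = 1) (hy : y ≠ 0) :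
    ‖‖y‖⁻¹ • y - q‖ ≤ 2 * ‖y - q‖ := by
  have hy' : 0 < ‖y‖ := norm_pos_iff.mpr hy
  have hscale : ‖‖y‖⁻¹ • y - y‖ = |‖q‖ - ‖y‖| := by
    rw [show ‖y‖⁻¹ • y - y = (‖y‖⁻¹ - 1) • y by rw [sub_smul, one_smul], norm_smul,
      Real.norm_eq_abs, hq,
      show ‖y‖⁻¹ - 1 = (1 - ‖y‖) / ‖y‖ by field_simp, abs_div, abs_norm, div_mul_cancel₀ _ hy'.ne']
  calc ‖‖y‖⁻¹ • y - q‖ ≤ ‖‖y‖⁻¹ • y - y‖ + ‖y - q‖ := norm_sub_le_norm_sub_add_norm_sub _ _ _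
    _ ≤ ‖y - q‖ + ‖y - q‖ := by
      rw [hscale, norm_sub_rev y]; gcongr; exact abs_norm_sub_norm_le q y
    _ = 2 * ‖y - q‖ := by ring

theorem exists_unit_near_notMem_of_finite [FiniteDimensional ℝ V] {q : V} (hq : ‖q‖ = 1)
    {ε : ℝ} (hε : 0 < ε) {Ws : Set (Submodule ℝ V)} (hWs : Ws.Finite) (hWs_ne : ∀ W ∈ Ws, W ≠ ⊤) :
    ∃ p : V, ‖p‖ = 1 ∧ ‖p - q‖ < ε ∧ ∀ W ∈ Ws, p ∉ W := by
  have hdense : Dense (⋂ W ∈ Ws, ((W : Set V)ᶜ)) := by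
    refine dense_biInter_of_isOpen (fun W _ => (W.closed_of_finiteDimensional).isOpen_compl)
      hWs.countable fun W hW => ?_
    rw [← interior_eq_empty_iff_dense_compl, ← Set.not_nonempty_iff_eq_empty]
    exact fun h => hWs_ne W hW (W.eq_top_of_nonempty_interior' h)
  obtain ⟨y, hyW, hyq⟩ := hdense.exists_mem_open Metric.isOpen_ball
    ⟨q, Metric.mem_ball_self (lt_min (half_pos hε) one_pos)⟩
  rw [Metric.mem_ball, dist_eq_norm, lt_min_iff] at hyq
  have hy0 : y ≠ 0 := by
    rintro rfl
    simp [hq] at hyq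
  have hyW' : ∀ W ∈ Ws, y ∉ W := by simpa using hyW
  refine ⟨‖y‖⁻¹ • y, norm_smul_inv_norm hy0, ?_, fun W hW h => hyW' W hW ?_⟩
  · linarith [norm_inv_norm_smul_sub_le hq hy0]
  · exact (W.smul_mem_iff (inv_ne_zero (norm_ne_zero_iff.mpr hy0))).mp h

end Normed

section

variable {V : Type*} [NormedAddCommGroup V] [NormedSpace ℝ V]

def planes (T : Set V) : Set (Submodule ℝ V) :=
  {P | finrank ℝ P = 2 ∧ ∃ a ∈ T, ∃ b ∈ T, a ≠ b ∧ a ∈ P ∧ b ∈ P}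

def lines (T : Set V) : Set (Submodule ℝ V) :=
  {L | ∃ P ∈ planes T, ∃ Q ∈ planes T, P ≠ Q ∧ P ⊓ Q = L}

structure GeneralPosition (T : Set V) : Prop where
  norm_eq_one : ∀ a ∈ T, ‖a‖ = 1
  /-- For `a = b` this says that distinct points are linearly independent. -/
  notMem_span_pair : ∀ a ∈ T, ∀ b ∈ T, ∀ c ∈ T, c ≠ a → c ≠ b → c ∉ span ℝ {a, b}
  mem_or_neg_mem : ∀ P₁ ∈ planes T, ∀ P₂ ∈ planes T, ∀ P₃ ∈ planes T,
    P₁ ≠ P₂ → P₂ ≠ P₃ → P₁ ≠ P₃ → ∀ x, ‖x‖ = 1 → x ∈ P₁ → x ∈ P₂ → x ∈ P₃ → x ∈ T ∪ -T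

def obstructions (T : Set V) : Set (Submodule ℝ V) :=
  Set.image2 (fun a b => span ℝ {a, b}) T T ∪ Set.image2 (fun L a => L ⊔ span ℝ {a}) (lines T) T

theorem planes_insert {T : Set V} {p : V} {P : Submodule ℝ V} (hP : P ∈ planes (insert p T)) :
    P ∈ planes T ∨ p ∈ P ∧ ∃ a ∈ T, a ∈ P := by
  obtain ⟨h2, a, rfl | ha, b, rfl | hb, hab, haP, hbP⟩ := hP
  · exact absurd rfl hab
  · exact Or.inr ⟨haP, b, hb, hbP⟩
  · exact Or.inr ⟨hbP, a, ha, haP⟩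
  · exact Or.inl ⟨h2, a, ha, b, hb, hab, haP, hbP⟩

theorem finrank_le_one_of_mem_lines [FiniteDimensional ℝ V] {T : Set V} {L : Submodule ℝ V}
    (hL : L ∈ lines T) : finrank ℝ L ≤ 1 := by
  obtain ⟨P, hP, Q, hQ, hPQ, rfl⟩ := hL
  exact finrank_inf_le_one hP.1 hQ.1 hPQ

theorem obstructions_ne_top [FiniteDimensional ℝ V] {T : Set V} (hV : 2 < finrank ℝ V) :
    ∀ W ∈ obstructions T, W ≠ ⊤ := by
  suffices ∀ W ∈ obstructions T, finrank ℝ W ≤ 2 by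
    rintro W hW rfl
    have := this ⊤ hW
    rw [finrank_top] at this
    omega
  have hsingle (a : V) : finrank ℝ (span ℝ {a}) ≤ 1 :=
    (finrank_span_le_card ({a} : Set V)).trans (by simp)
  rintro W (⟨a, -, b, -, rfl⟩ | ⟨L, hL, a, -, rfl⟩)
  · show finrank ℝ (span ℝ {a, b}) ≤ 2
    rw [span_insert]
    exact (finrank_add_le_finrank_add_finrank _ _).trans (add_le_add (hsingle a) (hsingle b))
  · exact (finrank_add_le_finrank_add_finrank _ _).trans
      (add_le_add (finrank_le_one_of_mem_lines hL) (hsingle a))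

namespace GeneralPosition

variable {T : Set V}

theorem empty : GeneralPosition (∅ : Set V) :=
  ⟨by simp, by simp, by simp [planes]⟩

theorem ne_zero (hT : GeneralPosition T) {a : V} (ha : a ∈ T) : a ≠ 0 :=
  norm_ne_zero_iff.mp (hT.norm_eq_one a ha ▸ one_ne_zero)

theorem notMem_span_singleton (hT : GeneralPosition T) {a b : V} (ha : a ∈ T) (hb : b ∈ T)
    (hab : a ≠ b) : b ∉ span ℝ {a} := by
  simpa using hT.notMem_span_pair a ha a ha b hb hab.symm hab.symm

theorem span_pair_eq_of_mem [FiniteDimensional ℝ V] (hT : GeneralPosition T)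
    {P : Submodule ℝ V} (hP : finrank ℝ P = 2) {a b : V} (ha : a ∈ T) (hb : b ∈ T) (hab : a ≠ b)
    (haP : a ∈ P) (hbP : b ∈ P) : span ℝ {a, b} = P :=
  span_pair_eq_of_finrank_eq_two hP haP hbP (hT.ne_zero hb)
    (hT.notMem_span_singleton hb ha hab.symm)

theorem planes_finite [FiniteDimensional ℝ V] (hT : GeneralPosition T) (hTfin : T.Finite) :
    (planes T).Finite := by
  refine (hTfin.image2 (fun a b => span ℝ {a, b}) hTfin).subset ?_
  rintro P ⟨hP, a, ha, b, hb, hab, haP, hbP⟩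
  exact ⟨a, ha, b, hb, hT.span_pair_eq_of_mem hP ha hb hab haP hbP⟩

theorem obstructions_finite [FiniteDimensional ℝ V] (hT : GeneralPosition T) (hTfin : T.Finite) :
    (obstructions T).Finite := by
  have hlines : (lines T).Finite := by
    refine ((hT.planes_finite hTfin).image2 (· ⊓ ·) (hT.planes_finite hTfin)).subset ?_
    rintro L ⟨P, hP, Q, hQ, -, rfl⟩
    exact Set.mem_image2_of_mem hP hQ
  exact (hTfin.image2 _ hTfin).union (hlines.image2 _ hTfin)

theorem notMem_span_pair_insert (hT : GeneralPosition T) {p : V}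
    (hp : ∀ a ∈ T, ∀ b ∈ T, p ∉ span ℝ {a, b}) :
    ∀ a ∈ insert p T, ∀ b ∈ insert p T, ∀ c ∈ insert p T, c ≠ a → c ≠ b →
      c ∉ span ℝ {a, b} := by
  have exchange : ∀ b ∈ T, ∀ c ∈ T, c ≠ b → c ∉ span ℝ {p, b} := fun b hb c hc hcb h =>
    hp c hc b hb (mem_span_insert_exchange h (hT.notMem_span_singleton hb hc hcb.symm))
  rintro a ha b hb c (rfl | hc) hca hcb
  · exact hp a (ha.resolve_left hca.symm) b (hb.resolve_left hcb.symm)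
  rcases ha with rfl | ha <;> rcases hb with rfl | hb
  · intro h
    have := mem_span_insert_exchange (s := ∅) (by simpa using h) (by simpa using hT.ne_zero hc)
    exact hp c hc c hc (by simpa using this)
  · exact exchange b hb c hc hcb
  · rw [Set.pair_comm]
    exact exchange a ha c hc hca
  · exact hT.notMem_span_pair a ha b hb c hc hca hcb

theorem mem_or_neg_mem_insert [FiniteDimensional ℝ V] (hT : GeneralPosition T) {p : V}
    (hp : ‖p‖ = 1) (hpL : ∀ L ∈ lines T, ∀ a ∈ T, p ∉ L ⊔ span ℝ {a}) :
    ∀ P₁ ∈ planes (insert p T), ∀ P₂ ∈ planes (insert p T), ∀ P₃ ∈ planes (insert p T),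
      P₁ ≠ P₂ → P₂ ≠ P₃ → P₁ ≠ P₃ → ∀ x, ‖x‖ = 1 → x ∈ P₁ → x ∈ P₂ → x ∈ P₃ →
        x ∈ insert p T ∪ -insert p T := by
  intro P₁ h₁ P₂ h₂ P₃ h₃ h12 h23 h13 x hx hx₁ hx₂ hx₃
  have old : T ∪ -T ⊆ insert p T ∪ -insert p T :=
    Set.union_subset_union (Set.subset_insert _ _) (Set.neg_subset_neg.mpr (Set.subset_insert _ _))
  have two_new : ∀ {P Q}, P ∈ planes (insert p T) → Q ∈ planes (insert p T) → P ≠ Q →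
      p ∈ P → p ∈ Q → x ∈ P → x ∈ Q → x ∈ insert p T ∪ -insert p T := by
    intro P Q hP hQ hPQ hpP hpQ hxP hxQ
    have hxp := mem_span_singleton_of_mem_inf hP.1 hQ.1 hPQ (norm_ne_zero_iff.mp (hp ▸ one_ne_zero))
      hpP hpQ hxP hxQ
    rcases eq_or_eq_neg_of_mem_span_singleton hx hp hxp with rfl | rfl <;> simp
  have one_new : ∀ {P Q R}, P ∈ planes (insert p T) → Q ∈ planes T → R ∈ planes T → Q ≠ R →
      p ∈ P → (∃ a ∈ T, a ∈ P) → x ∈ P → x ∈ Q → x ∈ R → x ∈ insert p T ∪ -insert p T := by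
    rintro P Q R hP hQ hR hQR hpP ⟨a, ha, haP⟩ hxP hxQ hxR
    by_cases hxa : x ∈ span ℝ {a}
    · apply old
      rcases eq_or_eq_neg_of_mem_span_singleton hx (hT.norm_eq_one a ha) hxa with rfl | rfl
      · exact Or.inl ha
      · exact Or.inr (by simpa using ha)
    · refine absurd ?_ (hpL _ ⟨Q, hQ, R, hR, hQR, rfl⟩ a ha)
      rw [← span_pair_eq_of_finrank_eq_two hP.1 hxP haP (hT.ne_zero ha) hxa] at hpP
      refine span_le.mpr (Set.insert_subset (mem_sup_left (mem_inf.mpr ⟨hxQ, hxR⟩)) ?_) hpP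
      exact Set.singleton_subset_iff.mpr (mem_sup_right (mem_span_singleton_self a))
  rcases planes_insert h₁ with o₁ | ⟨n₁, a₁⟩ <;> rcases planes_insert h₂ with o₂ | ⟨n₂, a₂⟩ <;>
    rcases planes_insert h₃ with o₃ | ⟨n₃, a₃⟩
  · exact old (hT.mem_or_neg_mem P₁ o₁ P₂ o₂ P₃ o₃ h12 h23 h13 x hx hx₁ hx₂ hx₃)
  · exact one_new h₃ o₁ o₂ h12 n₃ a₃ hx₃ hx₁ hx₂
  · exact one_new h₂ o₁ o₃ h13 n₂ a₂ hx₂ hx₁ hx₃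
  · exact two_new h₂ h₃ h23 n₂ n₃ hx₂ hx₃
  · exact one_new h₁ o₂ o₃ h23 n₁ a₁ hx₁ hx₂ hx₃
  · exact two_new h₁ h₃ h13 n₁ n₃ hx₁ hx₃
  · exact two_new h₁ h₂ h12 n₁ n₂ hx₁ hx₂
  · exact two_new h₁ h₂ h12 n₁ n₂ hx₁ hx₂

theorem insert_of_forall_notMem [FiniteDimensional ℝ V] (hT : GeneralPosition T) {p : V}
    (hp : ‖p‖ = 1) (hpW : ∀ W ∈ obstructions T, p ∉ W) : GeneralPosition (insert p T) where
  norm_eq_one := by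
    rintro a (rfl | ha)
    exacts [hp, hT.norm_eq_one a ha]
  notMem_span_pair := hT.notMem_span_pair_insert fun a ha b hb =>
    hpW _ (Or.inl (Set.mem_image2_of_mem ha hb))
  mem_or_neg_mem := hT.mem_or_neg_mem_insert hp fun L hL a ha =>
    hpW _ (Or.inr (Set.mem_image2_of_mem hL ha))

theorem exists_insert [FiniteDimensional ℝ V] (hV : 2 < finrank ℝ V) (hT : GeneralPosition T)
    (hTfin : T.Finite) {q : V} (hq : ‖q‖ = 1) {ε : ℝ} (hε : 0 < ε) :
    ∃ p, ‖p - q‖ < ε ∧ p ∉ T ∧ GeneralPosition (insert p T) := by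
  obtain ⟨p, hp, hpq, hpW⟩ := exists_unit_near_notMem_of_finite hq hε
    (hT.obstructions_finite hTfin) (obstructions_ne_top hV)
  refine ⟨p, hpq, fun h => ?_, hT.insert_of_forall_notMem hp hpW⟩
  exact hpW _ (Or.inl (Set.mem_image2_of_mem h h)) (subset_span (by simp))

end GeneralPosition

end

section Approximation

variable {V : Type*} [NormedAddCommGroup V] [NormedSpace ℝ V] [FiniteDimensional ℝ V]

theorem exists_generalPosition_approx_fin (hV : 2 < finrank ℝ V) {ε : ℝ} (hε : 0 < ε) :
    ∀ (n : ℕ) (q : Fin n → V), (∀ i, ‖q i‖ = 1) → ∃ p : Fin n → V,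
      Function.Injective p ∧ GeneralPosition (Set.range p) ∧ ∀ i, ‖p i - q i‖ < ε
  | 0, q, _ => ⟨q, Function.injective_of_subsingleton q,
      by simpa [Set.range_eq_empty] using GeneralPosition.empty, by simp⟩
  | n + 1, q, hq => by
    obtain ⟨p, hp_inj, hp, hpq⟩ :=
      exists_generalPosition_approx_fin hV hε n (Fin.tail q) fun i => hq _
    obtain ⟨p₀, hp₀q, hp₀, hins⟩ := hp.exists_insert hV (Set.finite_range p) (hq 0) hε
    refine ⟨Fin.cons p₀ p, Fin.cons_injective_iff.mpr ⟨hp₀, hp_inj⟩, by rwa [Fin.range_cons],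
      Fin.cases (by simpa using hp₀q) fun i => by simpa [Fin.tail] using hpq i⟩

theorem exists_generalPosition_approx {ι : Type*} [Finite ι] (hV : 2 < finrank ℝ V) (q : ι → V)
    (hq : ∀ i, ‖q i‖ = 1) {ε : ℝ} (hε : 0 < ε) : ∃ p : ι → V,
      Function.Injective p ∧ GeneralPosition (Set.range p) ∧ ∀ i, ‖p i - q i‖ < ε := by
  obtain ⟨n, ⟨e⟩⟩ := Finite.exists_equiv_fin ι
  obtain ⟨p, hp_inj, hp, hpq⟩ :=
    exists_generalPosition_approx_fin hV hε n (q ∘ e.symm) fun i => hq _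
  exact ⟨p ∘ e, hp_inj.comp e.injective, by rwa [e.surjective.range_comp],
    fun i => by simpa using hpq (e i)⟩

end Approximation

theorem real_inner_pos_of_norm_sub_lt {F : Type*} [NormedAddCommGroup F] [InnerProductSpace ℝ F]
    {x v n : F} (hn : ‖n‖ = 1) (h : ‖x - v‖ < ⟪v, n⟫) : 0 < ⟪x, n⟫ := by
  have := real_inner_le_norm (v - x) n
  rw [inner_sub_left, hn, mul_one, norm_sub_rev] at this
  linarith

theorem fine_of_generalPosition {S : Set E3} (hfin : S.Finite) (hS : GeneralPosition S)
    (hhemi : ∀ n ∈ sphere2, 3 ≤ {x ∈ S | 0 < ⟪x, n⟫}.ncard) : Fine S := by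
  refine ⟨hfin, hS.norm_eq_one, ?_, ?_, hhemi⟩
  · rintro x hx y hy z hz hxy hyz hxz C ⟨P, hP, rfl⟩ hxC hyC hzC
    have hxy_span := hS.span_pair_eq_of_mem hP hx hy hxy hxC.2 hyC.2
    exact hS.notMem_span_pair x hx y hy z hz hxz.symm hyz.symm (hxy_span ▸ hzC.2)
  · rintro C₁ C₂ C₃ ⟨P₁, hP₁, rfl⟩ ⟨P₂, hP₂, rfl⟩ ⟨P₃, hP₃, rfl⟩ h12 h23 h13
      ⟨a₁, ha₁, b₁, hb₁, hab₁, haC₁, hbC₁⟩ ⟨a₂, ha₂, b₂, hb₂, hab₂, haC₂, hbC₂⟩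
      ⟨a₃, ha₃, b₃, hb₃, hab₃, haC₃, hbC₃⟩ x hx hx₁ hx₂ hx₃
    exact hS.mem_or_neg_mem P₁ ⟨hP₁, a₁, ha₁, b₁, hb₁, hab₁, haC₁.2, hbC₁.2⟩
      P₂ ⟨hP₂, a₂, ha₂, b₂, hb₂, hab₂, haC₂.2, hbC₂.2⟩
      P₃ ⟨hP₃, a₃, ha₃, b₃, hb₃, hab₃, haC₃.2, hbC₃.2⟩
      (fun h => h12 (by rw [h])) (fun h => h23 (by rw [h])) (fun h => h13 (by rw [h]))
      x hx hx₁.2 hx₂.2 hx₃.2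

def octahedron (i : Fin 3 × Bool) : E3 := EuclideanSpace.single i.1 (if i.2 then 1 else -1)

theorem norm_octahedron (i : Fin 3 × Bool) : ‖octahedron i‖ = 1 := by
  obtain ⟨k, _ | _⟩ := i <;> simp [octahedron]

theorem exists_octahedron_inner_gt {n : E3} (hn : ‖n‖ = 1) : ∃ i, 1 / 2 < ⟪octahedron i, n⟫ := by
  have hsum : n 0 ^ 2 + n 1 ^ 2 + n 2 ^ 2 = 1 := by
    simpa [hn, Fin.sum_univ_three] using (EuclideanSpace.real_norm_sq_eq n).symm
  obtain ⟨k, hk⟩ : ∃ k, 1 / 4 < n k ^ 2 := by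
    by_contra! h
    linarith [h 0, h 1, h 2]
  have hinner (b : Bool) : ⟪octahedron (k, b), n⟫ = (if b then 1 else -1) * n k := by
    simp [octahedron, EuclideanSpace.inner_single_left]
  rcases le_or_gt 0 (n k) with h | h
  · exact ⟨(k, true), by rw [hinner, if_pos rfl]; nlinarith⟩
  · exact ⟨(k, false), by rw [hinner, if_neg Bool.false_ne_true]; nlinarith⟩

/-- There exists a fine subset of the sphere. -/
theorem exists_fine_set : ∃ S : Set E3, Fine S := by
  have hdim : 2 < finrank ℝ E3 := by simp
  obtain ⟨p, hp_inj, hp, hpq⟩ := exists_generalPosition_approx hdim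
    (fun i : (Fin 3 × Bool) × Fin 3 => octahedron i.1) (fun i => norm_octahedron i.1) one_half_pos
  refine ⟨Set.range p, fine_of_generalPosition (Set.finite_range p) hp fun n hn => ?_⟩
  obtain ⟨v, hv⟩ := exists_octahedron_inner_gt hn
  set near : Fin 3 → E3 := fun j => p (v, j)
  have hsub : Set.range near ⊆ {x ∈ Set.range p | 0 < ⟪x, n⟫} := by
    rintro _ ⟨j, rfl⟩
    exact ⟨⟨_, rfl⟩, real_inner_pos_of_norm_sub_lt hn ((hpq (v, j)).trans hv)⟩
  have hnear : Function.Injective near := hp_inj.comp (Prod.mk_right_injective v)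
  calc 3 = (Set.range near).ncard := by rw [Set.ncard_range_of_injective hnear, Nat.card_fin]
    _ ≤ _ := Set.ncard_le_ncard hsub ((Set.finite_range p).sep _)
end
end

section
/- For every fine set S ⊆ S² there exists ε > 0 such that: (i) the closed geodesic balls {x ∈ S² : ρ(x,s) ≤ ε}, for s ranging over S ∪ (−S), are pairwise disjoint; and (ii) for every p ∈ S² the open geodesic ball {x ∈ S² : ρ(x,p) < π/2 − ε} contains at least 3 points of S. -/
open scoped RealInnerProductSpace
open Real

noncomputable section

open Pointwise

/-- The chord is at most the arc: for unit vectors, `‖x - s‖ ≤ rho x s`. -/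
lemma chord_le_rho (x s : E3) (hx : ‖x‖ = 1) (hs : ‖s‖ = 1) : ‖x - s‖ ≤ rho x s := by
  have hcs : -1 ≤ ⟪x, s⟫ ∧ ⟪x, s⟫ ≤ 1 := by
    have := abs_real_inner_le_norm x s
    rw [hx, hs] at this
    constructor <;> [linarith [neg_abs_le (⟪x, s⟫ : ℝ)]; linarith [le_abs_self (⟪x, s⟫ : ℝ)]]
  have hr0 : 0 ≤ rho x s := Real.arccos_nonneg _
  have hcos : Real.cos (rho x s) = ⟪x, s⟫ := Real.cos_arccos hcs.1 hcs.2
  have hsq : ‖x - s‖ ^ 2 = 2 - 2 * Real.cos (rho x s) := by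
    rw [norm_sub_sq_real, hx, hs, hcos]; ring
  have hub := Real.one_sub_sq_div_two_le_cos (x := rho x s)
  nlinarith [norm_nonneg (x - s)]

set_option maxHeartbeats 2000000 in
/-- For every fine set there is an `ε > 0` such that the closed geodesic
`ε`-balls centered at points of `S ∪ (-S)` are pairwise disjoint, and every
open geodesic ball of radius `π/2 - ε` contains at least 3 points of `S`. -/
theorem fine_set_eps (S : Set E3) (hS : Fine S) :
    ∃ ε > (0:ℝ),
      (∀ s ∈ S ∪ (-S), ∀ s' ∈ S ∪ (-S), s ≠ s' →
        Disjoint {x ∈ sphere2 | rho x s ≤ ε} {x ∈ sphere2 | rho x s' ≤ ε}) ∧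
      (∀ p ∈ sphere2, 3 ≤ {x ∈ S | rho x p < π / 2 - ε}.ncard) := by
  classical
  obtain ⟨hfin, hsub, -, -, h3⟩ := hS
  -- Every point of S² sees three distinct points of S in its open hemisphere.
  have key : ∀ p ∈ sphere2, ∃ a b c, a ∈ S ∧ b ∈ S ∧ c ∈ S ∧ a ≠ b ∧ a ≠ c ∧ b ≠ c ∧
      0 < ⟪a, p⟫ ∧ 0 < ⟪b, p⟫ ∧ 0 < ⟪c, p⟫ := by
    intro p hp
    have hAfin : {x ∈ S | 0 < ⟪x, p⟫}.Finite := hfin.subset (Set.sep_subset _ _)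
    have h := h3 p hp
    rw [Set.ncard_eq_toFinset_card _ hAfin] at h
    have h2 : 2 < hAfin.toFinset.card := by omega
    obtain ⟨a, b, c, ha, hb, hc, hab, hac, hbc⟩ := Finset.two_lt_card_iff.mp h2
    rw [Set.Finite.mem_toFinset] at ha hb hc
    exact ⟨a, b, c, ha.1, hb.1, hc.1, hab, hac, hbc, ha.2, hb.2, hc.2⟩
  -- a base point on the sphere
  set n₀ : E3 := EuclideanSpace.single (0 : Fin 3) (1 : ℝ) with hn₀def
  have hn₀ : n₀ ∈ sphere2 := by
    simp [sphere2, hn₀def, EuclideanSpace.norm_single]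
  have hsph : sphere2 = Metric.sphere (0 : E3) 1 := by
    ext x; simp [sphere2, mem_sphere_zero_iff_norm]
  -- the finset of points of S
  set Sfin : Finset E3 := hfin.toFinset with hSfin
  -- triples of distinct points of S
  set Q : Finset ((E3 × E3) × E3) :=
    ((Sfin ×ˢ Sfin) ×ˢ Sfin).filter
      (fun q => q.1.1 ≠ q.1.2 ∧ q.1.1 ≠ q.2 ∧ q.1.2 ≠ q.2) with hQdef
  have hmemQ : ∀ a b c : E3, a ∈ S → b ∈ S → c ∈ S → a ≠ b → a ≠ c → b ≠ c →
      ((a, b), c) ∈ Q := by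
    intro a b c ha hb hc hab hac hbc
    simp [hQdef, Finset.mem_filter, Finset.mem_product, hSfin, hfin.mem_toFinset,
      ha, hb, hc, hab, hac, hbc]
  have hQ : Q.Nonempty := by
    obtain ⟨a, b, c, ha, hb, hc, hab, hac, hbc, -, -, -⟩ := key n₀ hn₀
    exact ⟨((a, b), c), hmemQ a b c ha hb hc hab hac hbc⟩
  set val : E3 → ℝ :=
    fun p => Q.sup' hQ (fun q => min ⟪q.1.1, p⟫ (min ⟪q.1.2, p⟫ ⟪q.2, p⟫)) with hvaldef
  have hvalcont : Continuous val := by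
    apply Continuous.finset_sup'_apply hQ
    intro q _
    exact ((continuous_const.inner continuous_id).min
      ((continuous_const.inner continuous_id).min
        (continuous_const.inner continuous_id)))
  -- minimum of val over the compact sphere
  have hcomp : IsCompact sphere2 := by rw [hsph]; exact isCompact_sphere 0 1
  obtain ⟨p₀, hp₀, hmin'⟩ :=
    hcomp.exists_isMinOn ⟨n₀, hn₀⟩ hvalcont.continuousOn
  have hmin : ∀ p ∈ sphere2, val p₀ ≤ val p := fun p hp => isMinOn_iff.mp hmin' p hp
  set δ : ℝ := val p₀ with hδdef
  have hδpos : 0 < δ := by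
    obtain ⟨a, b, c, ha, hb, hc, hab, hac, hbc, hpa, hpb, hpc⟩ := key p₀ hp₀
    have h := Finset.le_sup' (f := fun q : (E3 × E3) × E3 =>
        min ⟪q.1.1, p₀⟫ (min ⟪q.1.2, p₀⟫ ⟪q.2, p₀⟫)) (hmemQ a b c ha hb hc hab hac hbc)
    exact lt_of_lt_of_le (lt_min hpa (lt_min hpb hpc)) h
  have hδle1 : δ ≤ 1 := by
    obtain ⟨q, hqQ, hqeq⟩ := Finset.exists_mem_eq_sup' hQ
      (fun q : (E3 × E3) × E3 => min ⟪q.1.1, p₀⟫ (min ⟪q.1.2, p₀⟫ ⟪q.2, p₀⟫))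
    have hq1 : q.1.1 ∈ S := by
      have := hqQ
      simp only [hQdef, Finset.mem_filter, Finset.mem_product] at this
      exact (hfin.mem_toFinset).mp this.1.1.1
    have h1 : ‖q.1.1‖ = 1 := hsub hq1
    have h2 : ‖p₀‖ = 1 := hp₀
    have := real_inner_le_norm q.1.1 p₀
    rw [h1, h2, mul_one] at this
    calc δ = min ⟪q.1.1, p₀⟫ (min ⟪q.1.2, p₀⟫ ⟪q.2, p₀⟫) := hqeq
      _ ≤ ⟪q.1.1, p₀⟫ := min_le_left _ _
      _ ≤ 1 := this
  -- minimum pairwise distance of S ∪ (-S)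
  have hUfin : (S ∪ (-S)).Finite := by
    refine hfin.union ?_
    have : (-S : Set E3) = (fun x : E3 => -x) '' S := by
      ext x
      simp only [Set.mem_neg, Set.mem_image]
      constructor
      · intro h; exact ⟨-x, h, by simp⟩
      · rintro ⟨y, hy, rfl⟩; simpa using hy
    rw [this]
    exact hfin.image _
  set D : Set ℝ :=
    (fun p : E3 × E3 => ‖p.1 - p.2‖) ''
      (((S ∪ (-S)) ×ˢ (S ∪ (-S))) ∩ {p | p.1 ≠ p.2}) with hDdef
  have hDfin : D.Finite := (((hUfin.prod hUfin).inter_of_left _).image _)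
  have hDne : D.Nonempty := by
    obtain ⟨a, b, c, ha, hb, hc, hab, -, -, -, -, -⟩ := key n₀ hn₀
    exact ⟨‖a - b‖, ⟨(a, b), ⟨⟨Or.inl ha, Or.inl hb⟩, hab⟩, rfl⟩⟩
  have hDFne : hDfin.toFinset.Nonempty := by
    rwa [Set.Finite.toFinset_nonempty]
  set d : ℝ := hDfin.toFinset.min' hDFne with hddef
  have hdpos : 0 < d := by
    have hmem : d ∈ hDfin.toFinset := Finset.min'_mem _ _
    rw [Set.Finite.mem_toFinset] at hmem
    obtain ⟨p, ⟨-, hne⟩, heq⟩ := hmem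
    rw [← heq]
    have : p.1 ≠ p.2 := hne
    simpa [norm_pos_iff, sub_ne_zero] using this
  have hdle : ∀ a ∈ S ∪ (-S), ∀ b ∈ S ∪ (-S), a ≠ b → d ≤ ‖a - b‖ := by
    intro a ha b hb hab
    exact Finset.min'_le _ _ (hDfin.mem_toFinset.mpr ⟨(a, b), ⟨⟨ha, hb⟩, hab⟩, rfl⟩)
  -- the choice of ε
  refine ⟨min (d / 4) (δ / 2), by positivity, ?_, ?_⟩
  · -- disjointness of closed balls
    intro s hs s' hs' hne
    rw [Set.disjoint_left]
    rintro x ⟨hx1, hx2⟩ ⟨-, hx4⟩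
    have hxn : ‖x‖ = 1 := hx1
    have hsn : ‖s‖ = 1 := by
      rcases hs with h | h
      · exact hsub h
      · have : ‖-s‖ = 1 := hsub (by simpa using h)
        simpa using this
    have hs'n : ‖s'‖ = 1 := by
      rcases hs' with h | h
      · exact hsub h
      · have : ‖-s'‖ = 1 := hsub (by simpa using h)
        simpa using this
    have h1 : ‖x - s‖ ≤ min (d / 4) (δ / 2) := (chord_le_rho x s hxn hsn).trans hx2
    have h2 : ‖x - s'‖ ≤ min (d / 4) (δ / 2) := (chord_le_rho x s' hxn hs'n).trans hx4
    have hd' : d ≤ ‖s - s'‖ := hdle s hs s' hs' hne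
    have htri : ‖s - s'‖ ≤ ‖s - x‖ + ‖x - s'‖ := by
      calc ‖s - s'‖ = ‖(s - x) + (x - s')‖ := by rw [sub_add_sub_cancel]
        _ ≤ ‖s - x‖ + ‖x - s'‖ := norm_add_le _ _
    rw [norm_sub_rev s x] at htri
    have hm : min (d / 4) (δ / 2) ≤ d / 4 := min_le_left _ _
    linarith
  · -- each open ball of radius π/2 - ε contains 3 points of S
    intro p hp
    have hδp : δ ≤ val p := hmin p hp
    obtain ⟨q, hqQ, hqeq⟩ := Finset.exists_mem_eq_sup' hQ
      (fun q : (E3 × E3) × E3 => min ⟪q.1.1, p⟫ (min ⟪q.1.2, p⟫ ⟪q.2, p⟫))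
    have hvp : val p = min ⟪q.1.1, p⟫ (min ⟪q.1.2, p⟫ ⟪q.2, p⟫) := hqeq
    obtain ⟨⟨a, b⟩, c⟩ := q
    simp only [hQdef, Finset.mem_filter, Finset.mem_product] at hqQ
    obtain ⟨⟨⟨haS, hbS⟩, hcS⟩, hab, hac, hbc⟩ := hqQ
    rw [hfin.mem_toFinset] at haS hbS hcS
    simp only at hvp
    have hmins : δ ≤ ⟪a, p⟫ ∧ δ ≤ ⟪b, p⟫ ∧ δ ≤ ⟪c, p⟫ := by
      rw [hvp] at hδp
      simp only [le_min_iff] at hδp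
      exact ⟨hδp.1, hδp.2.1, hδp.2.2⟩
    set ε : ℝ := min (d / 4) (δ / 2) with hεdef
    have hεpos : 0 < ε := by positivity
    have hεle : ε ≤ δ / 2 := min_le_right _ _
    have hεlt : ε < π / 2 := by
      have := Real.pi_gt_three
      linarith
    have hrho : ∀ y, y ∈ S → δ ≤ ⟪y, p⟫ → rho y p < π / 2 - ε := by
      intro y hy hyδ
      have hy1 : ‖y‖ = 1 := hsub hy
      have hp1 : ‖p‖ = 1 := hp
      have hip : ⟪y, p⟫ ≤ 1 := by
        have := real_inner_le_norm y p
        rwa [hy1, hp1, mul_one] at this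
      have hsinε : Real.sin ε < δ := by
        have := Real.sin_le hεpos.le
        linarith
      have harc : Real.arccos ⟪y, p⟫ < Real.arccos (Real.sin ε) := by
        apply Real.strictAntiOn_arccos
          ⟨Real.neg_one_le_sin ε, Real.sin_le_one ε⟩
          ⟨by linarith, hip⟩
        linarith
      have hcoseq : Real.sin ε = Real.cos (π / 2 - ε) := (Real.cos_pi_div_two_sub ε).symm
      have harcsin : Real.arccos (Real.sin ε) = π / 2 - ε := by
        rw [hcoseq, Real.arccos_cos (by linarith) (by linarith [Real.pi_pos])]
      rw [harcsin] at harc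
      exact harc
    have habc : ({a, b, c} : Set E3) ⊆ {x ∈ S | rho x p < π / 2 - ε} := by
      intro y hy
      rcases hy with rfl | rfl | rfl
      · exact ⟨haS, hrho _ haS hmins.1⟩
      · exact ⟨hbS, hrho _ hbS hmins.2.1⟩
      · exact ⟨hcS, hrho _ hcS hmins.2.2⟩
    have hcard : ({a, b, c} : Set E3).ncard = 3 := by
      rw [Set.ncard_insert_of_notMem (by simp [hab, hac])
        ((Set.finite_singleton c).insert b),
        Set.ncard_insert_of_notMem (by simp [hbc]) (Set.finite_singleton c),
        Set.ncard_singleton]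
    calc (3 : ℕ) = ({a, b, c} : Set E3).ncard := hcard.symm
      _ ≤ _ := Set.ncard_le_ncard habc (hfin.subset (Set.sep_subset _ _))
end
end

section
/- Let S ⊆ S² be a fine set and let ε > 0 be such that (i) the closed geodesic balls of radius ε centered at the points of S ∪ (−S) are pairwise disjoint, and (ii) every open geodesic ball of radius π/2 − ε contains at least 3 points of S. Then for every p ∈ S² and every unit tangent vector u at p there exists a unit tangent vector v at p with ⟨u,v⟩ > 0 such that the arc τ(t) = γ_{p,v}(t), t ∈ [0,π], satisfies: τ(t) ∉ −S for all t ∈ (0,π), and τ(t) ∈ S for some t ∈ [ε, π − ε]. -/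
open scoped RealInnerProductSpace
open Real

noncomputable section

open Pointwise

lemma inner_comb {p w z : E3} (hp : ‖p‖ = 1) (hw : ‖w‖ = 1) (hpw : ⟪p, w⟫ = 0)
    {s t : ℝ} (hz : z = s • p + t • w) : ⟪p, z⟫ = s ∧ ⟪w, z⟫ = t := by
  have hwp : ⟪w, p⟫ = 0 := by rw [real_inner_comm, hpw]
  subst hz
  constructor
  · rw [inner_add_right, real_inner_smul_right, real_inner_smul_right, hpw,
      real_inner_self_eq_norm_sq, hp]; ring
  · rw [inner_add_right, real_inner_smul_right, real_inner_smul_right, hwp,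
      real_inner_self_eq_norm_sq, hw]; ring

lemma inner_comb_left {p w z u : E3} (hup : ⟪u, p⟫ = 0)
    {s t : ℝ} (hz : z = s • p + t • w) : ⟪u, z⟫ = t * ⟪u, w⟫ := by
  subst hz
  rw [inner_add_right, real_inner_smul_right, real_inner_smul_right, hup]; ring

lemma norm_comb {p w z : E3} (hp : ‖p‖ = 1) (hw : ‖w‖ = 1) (hpw : ⟪p, w⟫ = 0)
    {s t : ℝ} (hz : z = s • p + t • w) (hst : s ^ 2 + t ^ 2 = 1) : ‖z‖ = 1 := by
  obtain ⟨h1, h2⟩ := inner_comb hp hw hpw hz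
  have h3 : ⟪z, z⟫ = s * ⟪p, z⟫ + t * ⟪w, z⟫ := by
    conv_lhs => rw [hz]
    rw [inner_add_left, real_inner_smul_left, real_inner_smul_left, hz]
  have hzz : ⟪z, z⟫ = 1 := by rw [h3, h1, h2, ← hst]; ring
  rw [real_inner_self_eq_norm_sq] at hzz
  nlinarith [norm_nonneg z]

lemma mem_span_comb {p w z : E3} {s t : ℝ} (hz : z = s • p + t • w) :
    z ∈ Submodule.span ℝ ({p, w} : Set E3) :=
  Submodule.mem_span_pair.2 ⟨s, t, hz.symm⟩

lemma span_pair_rank (p w : E3) (hp : ‖p‖ = 1) (hw : ‖w‖ = 1) (hpw : ⟪p, w⟫ = 0) :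
    Module.finrank ℝ (Submodule.span ℝ ({p, w} : Set E3)) = 2 := by
  have hli : LinearIndependent ℝ ![p, w] := by
    rw [LinearIndependent.pair_iff]
    intro s t hst
    obtain ⟨h1, h2⟩ := inner_comb hp hw hpw hst.symm
    simp only [inner_zero_right] at h1 h2
    exact ⟨h1.symm, h2.symm⟩
  have h := finrank_span_eq_card hli
  have hr : Set.range ![p, w] = {p, w} := by
    simp [Matrix.range_cons, Matrix.range_empty, Set.pair_comm]
  rw [hr] at h
  simpa using h

lemma greatCircle_pair (p w : E3) (hp : ‖p‖ = 1) (hw : ‖w‖ = 1) (hpw : ⟪p, w⟫ = 0) :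
    GreatCircle (sphere2 ∩ (Submodule.span ℝ ({p, w} : Set E3) : Set E3)) :=
  ⟨_, span_pair_rank p w hp hw hpw, rfl⟩

lemma exists_dir {p x : E3} (hp : ‖p‖ = 1) (hx : ‖x‖ = 1)
    (h1 : ⟪p, x⟫ < 1) (h2 : -1 < ⟪p, x⟫) :
    ∃ w : E3, ∃ t : ℝ, ‖w‖ = 1 ∧ ⟪p, w⟫ = 0 ∧ 0 < t ∧ t < π ∧
      t = arccos ⟪p, x⟫ ∧ x = Real.cos t • p + Real.sin t • w := by
  have ht0 : 0 < arccos ⟪p, x⟫ := Real.arccos_pos.2 h1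
  have htπ : arccos ⟪p, x⟫ < π := lt_of_le_of_ne (Real.arccos_le_pi _)
    (fun h => absurd (Real.arccos_eq_pi.1 h) (by linarith))
  have hcos : Real.cos (arccos ⟪p, x⟫) = ⟪p, x⟫ := Real.cos_arccos h2.le h1.le
  have hsin : 0 < Real.sin (arccos ⟪p, x⟫) := Real.sin_pos_of_pos_of_lt_pi ht0 htπ
  have hxp : ⟪x, p⟫ = ⟪p, x⟫ := (real_inner_comm x p).symm
  refine ⟨(Real.sin (arccos ⟪p, x⟫))⁻¹ • (x - Real.cos (arccos ⟪p, x⟫) • p),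
    arccos ⟪p, x⟫, ?_, ?_, ht0, htπ, rfl, ?_⟩
  · have hin : ‖x - Real.cos (arccos ⟪p, x⟫) • p‖ ^ 2 = 1 - ⟪p, x⟫ ^ 2 := by
      rw [← real_inner_self_eq_norm_sq, inner_sub_left, inner_sub_right,
        inner_sub_right, real_inner_smul_left, real_inner_smul_left,
        real_inner_smul_right, real_inner_smul_right,
        real_inner_self_eq_norm_sq, real_inner_self_eq_norm_sq, hp, hx, hxp, hcos]
      ring
    have hs2 : Real.sin (arccos ⟪p, x⟫) ^ 2 = 1 - ⟪p, x⟫ ^ 2 := by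
      have h := Real.sin_sq_add_cos_sq (arccos ⟪p, x⟫); rw [hcos] at h; linarith
    have hn : ‖(Real.sin (arccos ⟪p, x⟫))⁻¹ • (x - Real.cos (arccos ⟪p, x⟫) • p)‖ ^ 2 = 1 := by
      rw [norm_smul, mul_pow, hin, Real.norm_eq_abs, abs_inv, abs_of_pos hsin, ← hs2,
        ← mul_pow, inv_mul_cancel₀ hsin.ne', one_pow]
    nlinarith [norm_nonneg ((Real.sin (arccos ⟪p, x⟫))⁻¹ • (x - Real.cos (arccos ⟪p, x⟫) • p)), hn]
  · rw [real_inner_smul_right, inner_sub_right, real_inner_smul_right,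
      real_inner_self_eq_norm_sq, hp, hcos]
    ring
  · rw [smul_smul, mul_inv_cancel₀ hsin.ne', one_smul]
    abel

lemma cos_bounds {t : ℝ} (h0 : 0 < t) (hπ : t < π) : -1 < Real.cos t ∧ Real.cos t < 1 := by
  constructor
  · have := Real.cos_lt_cos_of_nonneg_of_le_pi h0.le le_rfl hπ
    rwa [Real.cos_pi] at this
  · have := Real.cos_lt_cos_of_nonneg_of_le_pi le_rfl hπ.le h0
    rwa [Real.cos_zero] at this

lemma good_point {p u x : E3} (hp : ‖p‖ = 1) (hu : ‖u‖ = 1) (hpu : ⟪p, u⟫ = 0)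
    (hx : ‖x‖ = 1) {ε : ℝ} (hε : 0 < ε) (hεπ : ε < π / 2) (hxu : Real.sin ε < ⟪x, u⟫) :
    ∃ w : E3, ∃ t : ℝ, ‖w‖ = 1 ∧ ⟪p, w⟫ = 0 ∧ 0 < ⟪u, w⟫ ∧ ε < t ∧ t < π - ε ∧
      x = Real.cos t • p + Real.sin t • w := by
  have hup : ⟪u, p⟫ = 0 := by rw [real_inner_comm]; exact hpu
  have hsinε : 0 < Real.sin ε := Real.sin_pos_of_pos_of_lt_pi hε (by linarith [Real.pi_pos])
  have hb : |⟪p, x⟫| ≤ 1 := by simpa [hp, hx] using abs_real_inner_le_norm p x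
  have hxu' : ⟪u, x⟫ = ⟪x, u⟫ := real_inner_comm x u
  have h1 : ⟪p, x⟫ < 1 := by
    rcases lt_or_eq_of_le (abs_le.1 hb).2 with h | h
    · exact h
    · exfalso
      have : x = p := (inner_eq_one_iff_of_norm_eq_one hp hx).1 h |>.symm
      rw [this, hpu] at hxu
      linarith
  have h2 : -1 < ⟪p, x⟫ := by
    rcases lt_or_eq_of_le (abs_le.1 hb).1 with h | h
    · exact h
    · exfalso
      have hpx : ⟪p, -x⟫ = 1 := by rw [inner_neg_right, ← h]; norm_num
      have hxp : -x = p := ((inner_eq_one_iff_of_norm_eq_one hp (by simpa using hx)).1 hpx).symm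
      have : x = -p := by rw [← hxp, neg_neg]
      rw [this, inner_neg_left, hpu] at hxu
      linarith
  obtain ⟨w, t, hw, hpw, ht0, htπ, _, hxe⟩ := exists_dir hp hx h1 h2
  have hux : ⟪u, x⟫ = Real.sin t * ⟪u, w⟫ := inner_comb_left hup hxe
  have hsint : 0 < Real.sin t := Real.sin_pos_of_pos_of_lt_pi ht0 htπ
  have huw : 0 < ⟪u, w⟫ := by nlinarith
  have huw1 : ⟪u, w⟫ ≤ 1 := by
    have h' := abs_real_inner_le_norm u w
    rw [hu, hw, mul_one] at h'
    linarith [(abs_le.1 h').2]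
  have hsin_lt : Real.sin ε < Real.sin t := by nlinarith
  refine ⟨w, t, hw, hpw, huw, ?_, ?_, hxe⟩
  · by_contra h
    push_neg at h
    have : Real.sin t ≤ Real.sin ε :=
      Real.sin_le_sin_of_le_of_le_pi_div_two (by linarith) (by linarith) h
    linarith
  · by_contra h
    push_neg at h
    have hs : Real.sin (π - t) ≤ Real.sin ε :=
      Real.sin_le_sin_of_le_of_le_pi_div_two (by linarith [Real.pi_pos]) (by linarith) (by linarith)
    rw [Real.sin_pi_sub] at hs
    linarith

lemma bad_hit {S : Set E3} {p w : E3} (hp : ‖p‖ = 1) (hw : ‖w‖ = 1) (hpw : ⟪p, w⟫ = 0)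
    {t' : ℝ} (ht' : t' ∈ Set.Ioo (0:ℝ) π) (hmem : geo p w t' ∈ -S) :
    ∃ s ∈ S, s ∈ Submodule.span ℝ ({p, w} : Set E3) ∧ ⟪w, s⟫ < 0 ∧
      -1 < ⟪p, s⟫ ∧ ⟪p, s⟫ < 1 := by
  have hsS : -(geo p w t') ∈ S := Set.mem_neg.1 hmem
  have hse : -(geo p w t') = (-Real.cos t') • p + (-Real.sin t') • w := by
    simp only [geo, neg_add, neg_smul]
  obtain ⟨h1, h2⟩ := inner_comb hp hw hpw hse
  have hsint : 0 < Real.sin t' := Real.sin_pos_of_pos_of_lt_pi ht'.1 ht'.2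
  obtain ⟨hc1, hc2⟩ := cos_bounds ht'.1 ht'.2
  exact ⟨-(geo p w t'), hsS, mem_span_comb hse, by linarith, by rw [h1]; linarith,
    by rw [h1]; linarith⟩

lemma circles_ne {S : Set E3} (hsub : S ⊆ sphere2)
    (hfine1 : ∀ x ∈ S, ∀ y ∈ S, ∀ z ∈ S, x ≠ y → y ≠ z → x ≠ z →
      ∀ C : Set E3, GreatCircle C → x ∈ C → y ∈ C → z ∈ C → False)
    {p u wi wj xi xj si : E3} {ti tj : ℝ}
    (hp : ‖p‖ = 1) (hup : ⟪u, p⟫ = 0)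
    (hwi : ‖wi‖ = 1) (hpwi : ⟪p, wi⟫ = 0) (hui : 0 < ⟪u, wi⟫)
    (hwj : ‖wj‖ = 1) (hpwj : ⟪p, wj⟫ = 0) (huj : 0 < ⟪u, wj⟫)
    (hxiS : xi ∈ S) (hxjS : xj ∈ S) (hsiS : si ∈ S)
    (hxi : xi = Real.cos ti • p + Real.sin ti • wi)
    (hxj : xj = Real.cos tj • p + Real.sin tj • wj)
    (hsinti : 0 < Real.sin ti) (hsintj : 0 < Real.sin tj)
    (hxij : xi ≠ xj)
    (hsi_mem : si ∈ Submodule.span ℝ ({p, wi} : Set E3)) (hsi_w : ⟪wi, si⟫ < 0) :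
    sphere2 ∩ (Submodule.span ℝ ({p, wi} : Set E3) : Set E3) ≠
      sphere2 ∩ (Submodule.span ℝ ({p, wj} : Set E3) : Set E3) := by
  intro heq
  have hxj_in : xj ∈ sphere2 ∩ (Submodule.span ℝ ({p, wj} : Set E3) : Set E3) :=
    ⟨hsub hxjS, mem_span_comb hxj⟩
  rw [← heq] at hxj_in
  obtain ⟨a, b, hab⟩ := Submodule.mem_span_pair.1 hxj_in.2
  have hb : ⟪wi, xj⟫ = b := (inner_comb hp hwi hpwi hab.symm).2
  have h1 : ⟪u, xj⟫ = b * ⟪u, wi⟫ := inner_comb_left hup hab.symm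
  have h2 : ⟪u, xj⟫ = Real.sin tj * ⟪u, wj⟫ := inner_comb_left hup hxj
  have hbpos : 0 < b := by nlinarith
  have hxj_ne_si : xj ≠ si := by
    intro h
    rw [h] at hb
    linarith
  have hxi_wi : ⟪wi, xi⟫ = Real.sin ti := (inner_comb hp hwi hpwi hxi).2
  have hxi_ne_si : xi ≠ si := by
    intro h
    rw [h] at hxi_wi
    linarith
  exact hfine1 xi hxiS xj hxjS si hsiS hxij hxj_ne_si hxi_ne_si
    (sphere2 ∩ (Submodule.span ℝ ({p, wi} : Set E3) : Set E3))
    (greatCircle_pair p wi hp hwi hpwi)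
    ⟨hsub hxiS, mem_span_comb hxi⟩ hxj_in ⟨hsub hsiS, hsi_mem⟩

/-- Given a fine set `S` and a suitable `ε`, at every point `p` of the sphere
and in every open semicircle of tangent directions at `p` there is a direction
`v` such that the great half-circle arc from `p` in direction `v` avoids `-S`
on `(0,π)` and meets `S` at some time in `[ε, π-ε]`. -/
theorem fine_set_halfcircle (S : Set E3) (hS : Fine S) (ε : ℝ) (hε : 0 < ε)
    (hdisj : ∀ s ∈ S ∪ (-S), ∀ s' ∈ S ∪ (-S), s ≠ s' →
      Disjoint {x ∈ sphere2 | rho x s ≤ ε} {x ∈ sphere2 | rho x s' ≤ ε})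
    (hball : ∀ p ∈ sphere2, 3 ≤ {x ∈ S | rho x p < π / 2 - ε}.ncard) :
    ∀ p ∈ sphere2, ∀ u : E3, UnitTangent p u →
      ∃ v : E3, UnitTangent p v ∧ 0 < ⟪u, v⟫ ∧
        (∀ t ∈ Set.Ioo (0:ℝ) π, geo p v t ∉ -S) ∧
        (∃ t ∈ Set.Icc ε (π - ε), geo p v t ∈ S) := by
  obtain ⟨hSfin, hSsub, hfine1, hfine2, _hfine3⟩ := hS
  -- ε < π/2
  have hεπ : ε < π / 2 := by
    have hn : (EuclideanSpace.single 0 1 : E3) ∈ sphere2 := by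
      show ‖(EuclideanSpace.single (0 : Fin 3) (1:ℝ))‖ = 1
      simp [EuclideanSpace.norm_single]
    have h3 := hball _ hn
    obtain ⟨x, hx⟩ := Set.nonempty_of_ncard_ne_zero
      (s := {x ∈ S | rho x (EuclideanSpace.single 0 1 : E3) < π / 2 - ε}) (by omega)
    have h0 := Real.arccos_nonneg ⟪x, (EuclideanSpace.single 0 1 : E3)⟫
    have := hx.2
    rw [rho] at this
    linarith
  intro p hp u hu
  obtain ⟨hu1, hpu⟩ := hu
  have hp1 : ‖p‖ = 1 := hp
  have hup : ⟪u, p⟫ = 0 := by rw [real_inner_comm]; exact hpu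
  have h3 := hball u hu1
  set G := {x ∈ S | rho x u < π / 2 - ε} with hGdef
  have hGfin : G.Finite := hSfin.subset (Set.sep_subset _ _)
  obtain ⟨x₁, x₂, x₃, hx1, hx2, hx3, h12, h13, h23⟩ :=
    (Set.two_lt_ncard_iff hGfin).1 (by omega)
  have key : ∀ x ∈ G, Real.sin ε < ⟪x, u⟫ := by
    intro x hx
    have hxs : ‖x‖ = 1 := hSsub hx.1
    have hb : |⟪x, u⟫| ≤ 1 := by
      have h' := abs_real_inner_le_norm x u
      rwa [hxs, hu1, mul_one] at h'
    have hlt := hx.2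
    rw [rho] at hlt
    have hcc := Real.cos_lt_cos_of_nonneg_of_le_pi (Real.arccos_nonneg _)
      (by linarith [Real.pi_pos]) hlt
    rw [Real.cos_pi_div_two_sub,
      Real.cos_arccos (abs_le.1 hb).1 (abs_le.1 hb).2] at hcc
    exact hcc
  have hdata : ∀ x ∈ G, ∃ w : E3, ∃ t : ℝ, ‖w‖ = 1 ∧ ⟪p, w⟫ = 0 ∧ 0 < ⟪u, w⟫ ∧
      ε < t ∧ t < π - ε ∧ x = Real.cos t • p + Real.sin t • w :=
    fun x hx => good_point hp1 hu1 hpu (hSsub hx.1) hε hεπ (key x hx)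
  obtain ⟨w₁, t₁, hw1, hpw1, hu1', ht1a, ht1b, hx1e⟩ := hdata x₁ hx1
  obtain ⟨w₂, t₂, hw2, hpw2, hu2', ht2a, ht2b, hx2e⟩ := hdata x₂ hx2
  obtain ⟨w₃, t₃, hw3, hpw3, hu3', ht3a, ht3b, hx3e⟩ := hdata x₃ hx3
  have hππ := Real.pi_pos
  have done : ∀ (w : E3) (t : ℝ), ‖w‖ = 1 → ⟪p, w⟫ = 0 → 0 < ⟪u, w⟫ → ε < t → t < π - ε →
      (Real.cos t • p + Real.sin t • w ∈ S) →
      (∀ t' ∈ Set.Ioo (0:ℝ) π, geo p w t' ∉ -S) →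
      (∃ v : E3, UnitTangent p v ∧ 0 < ⟪u, v⟫ ∧
        (∀ t ∈ Set.Ioo (0:ℝ) π, geo p v t ∉ -S) ∧
        (∃ t ∈ Set.Icc ε (π - ε), geo p v t ∈ S)) := by
    intro w t hw hpw huw hta htb hmemS havoid
    exact ⟨w, ⟨hw, hpw⟩, huw, havoid, t, ⟨hta.le, htb.le⟩, hmemS⟩
  by_cases hpS : p ∈ S ∪ -S
  · -- p is (±) a point of S : the first arc works
    obtain ⟨s₀, hs₀S, hs₀e⟩ : ∃ s₀ ∈ S, s₀ = p ∨ s₀ = -p := by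
      rcases hpS with h | h
      · exact ⟨p, h, Or.inl rfl⟩
      · exact ⟨-p, Set.mem_neg.1 (by simpa using h), Or.inr rfl⟩
    have hps₀ : ⟪p, s₀⟫ = 1 ∨ ⟪p, s₀⟫ = -1 := by
      rcases hs₀e with h | h
      · left; rw [h, real_inner_self_eq_norm_sq, hp1]; norm_num
      · right; rw [h, inner_neg_right, real_inner_self_eq_norm_sq, hp1]; norm_num
    have hs₀span : s₀ ∈ Submodule.span ℝ ({p, w₁} : Set E3) := by
      have hpmem : p ∈ Submodule.span ℝ ({p, w₁} : Set E3) :=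
        Submodule.subset_span (Set.mem_insert _ _)
      rcases hs₀e with h | h
      · rw [h]; exact hpmem
      · rw [h]; exact Submodule.neg_mem _ hpmem
    refine done w₁ t₁ hw1 hpw1 hu1' ht1a ht1b (hx1e ▸ hx1.1) ?_
    intro t' ht' hmem
    obtain ⟨s, hsS, hs_span, hs_w, hs_p1, hs_p2⟩ := bad_hit hp1 hw1 hpw1 ht' hmem
    have hx1w : ⟪w₁, x₁⟫ = Real.sin t₁ := (inner_comb hp1 hw1 hpw1 hx1e).2
    have hx1p : ⟪p, x₁⟫ = Real.cos t₁ := (inner_comb hp1 hw1 hpw1 hx1e).1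
    have hsint1 : 0 < Real.sin t₁ :=
      Real.sin_pos_of_pos_of_lt_pi (by linarith) (by linarith)
    obtain ⟨hcb1, hcb2⟩ := cos_bounds (show (0:ℝ) < t₁ by linarith) (by linarith)
    have hx1_ne_s : x₁ ≠ s := by intro h; rw [h] at hx1w; linarith
    have hs_ne_s₀ : s ≠ s₀ := by
      intro h; rw [h] at hs_p1 hs_p2
      rcases hps₀ with h' | h' <;> linarith
    have hx1_ne_s₀ : x₁ ≠ s₀ := by
      intro h; rw [h] at hx1p
      rcases hps₀ with h' | h' <;> rw [hx1p] at h' <;> linarith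
    exact hfine1 x₁ hx1.1 s hsS s₀ hs₀S hx1_ne_s hs_ne_s₀ hx1_ne_s₀
      (sphere2 ∩ (Submodule.span ℝ ({p, w₁} : Set E3) : Set E3))
      (greatCircle_pair p w₁ hp1 hw1 hpw1)
      ⟨hSsub hx1.1, mem_span_comb hx1e⟩ ⟨hSsub hsS, hs_span⟩ ⟨hSsub hs₀S, hs₀span⟩
  · -- p is not (±) a point of S
    by_cases hb1 : ∀ t' ∈ Set.Ioo (0:ℝ) π, geo p w₁ t' ∉ -S
    · exact done w₁ t₁ hw1 hpw1 hu1' ht1a ht1b (hx1e ▸ hx1.1) hb1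
    by_cases hb2 : ∀ t' ∈ Set.Ioo (0:ℝ) π, geo p w₂ t' ∉ -S
    · exact done w₂ t₂ hw2 hpw2 hu2' ht2a ht2b (hx2e ▸ hx2.1) hb2
    by_cases hb3 : ∀ t' ∈ Set.Ioo (0:ℝ) π, geo p w₃ t' ∉ -S
    · exact done w₃ t₃ hw3 hpw3 hu3' ht3a ht3b (hx3e ▸ hx3.1) hb3
    exfalso
    push_neg at hb1 hb2 hb3
    obtain ⟨r₁, hr1, hm1⟩ := hb1
    obtain ⟨r₂, hr2, hm2⟩ := hb2
    obtain ⟨r₃, hr3, hm3⟩ := hb3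
    obtain ⟨s₁, hs1S, hs1_span, hs1_w, _, _⟩ := bad_hit hp1 hw1 hpw1 hr1 hm1
    obtain ⟨s₂, hs2S, hs2_span, hs2_w, _, _⟩ := bad_hit hp1 hw2 hpw2 hr2 hm2
    obtain ⟨s₃, hs3S, hs3_span, hs3_w, _, _⟩ := bad_hit hp1 hw3 hpw3 hr3 hm3
    have hsint1 : 0 < Real.sin t₁ :=
      Real.sin_pos_of_pos_of_lt_pi (by linarith) (by linarith)
    have hsint2 : 0 < Real.sin t₂ :=
      Real.sin_pos_of_pos_of_lt_pi (by linarith) (by linarith)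
    have hsint3 : 0 < Real.sin t₃ :=
      Real.sin_pos_of_pos_of_lt_pi (by linarith) (by linarith)
    have hC12 := circles_ne hSsub hfine1 hp1 hup hw1 hpw1 hu1' hw2 hpw2 hu2'
      hx1.1 hx2.1 hs1S hx1e hx2e hsint1 hsint2 h12 hs1_span hs1_w
    have hC23 := circles_ne hSsub hfine1 hp1 hup hw2 hpw2 hu2' hw3 hpw3 hu3'
      hx2.1 hx3.1 hs2S hx2e hx3e hsint2 hsint3 h23 hs2_span hs2_w
    have hC13 := circles_ne hSsub hfine1 hp1 hup hw1 hpw1 hu1' hw3 hpw3 hu3'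
      hx1.1 hx3.1 hs1S hx1e hx3e hsint1 hsint3 h13 hs1_span hs1_w
    have hx1_ne_s1 : x₁ ≠ s₁ := by
      intro h
      have := (inner_comb hp1 hw1 hpw1 hx1e).2
      rw [h] at this; linarith
    have hx2_ne_s2 : x₂ ≠ s₂ := by
      intro h
      have := (inner_comb hp1 hw2 hpw2 hx2e).2
      rw [h] at this; linarith
    have hx3_ne_s3 : x₃ ≠ s₃ := by
      intro h
      have := (inner_comb hp1 hw3 hpw3 hx3e).2
      rw [h] at this; linarith
    have hpmem : ∀ w : E3, p ∈ Submodule.span ℝ ({p, w} : Set E3) :=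
      fun w => Submodule.subset_span (Set.mem_insert _ _)
    have := hfine2
      (sphere2 ∩ (Submodule.span ℝ ({p, w₁} : Set E3) : Set E3))
      (sphere2 ∩ (Submodule.span ℝ ({p, w₂} : Set E3) : Set E3))
      (sphere2 ∩ (Submodule.span ℝ ({p, w₃} : Set E3) : Set E3))
      (greatCircle_pair p w₁ hp1 hw1 hpw1)
      (greatCircle_pair p w₂ hp1 hw2 hpw2)
      (greatCircle_pair p w₃ hp1 hw3 hpw3)
      hC12 hC23 hC13
      ⟨x₁, hx1.1, s₁, hs1S, hx1_ne_s1, ⟨hSsub hx1.1, mem_span_comb hx1e⟩,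
        ⟨hSsub hs1S, hs1_span⟩⟩
      ⟨x₂, hx2.1, s₂, hs2S, hx2_ne_s2, ⟨hSsub hx2.1, mem_span_comb hx2e⟩,
        ⟨hSsub hs2S, hs2_span⟩⟩
      ⟨x₃, hx3.1, s₃, hs3S, hx3_ne_s3, ⟨hSsub hx3.1, mem_span_comb hx3e⟩,
        ⟨hSsub hs3S, hs3_span⟩⟩
      p hp ⟨hp, hpmem w₁⟩ ⟨hp, hpmem w₂⟩ ⟨hp, hpmem w₃⟩
    exact hpS this
end
end

section
/- Let f : S² → ℝ be a continuous odd L-good function. Then there exists a constant ν > 0 such that for every p ∈ S² and every unit tangent vector u at p there exists a unit tangent vector v at p with ⟨u,v⟩ > 0 and ∫₀^π f(γ_{p,v}(t)) dt < −ν. -/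
open scoped RealInnerProductSpace
open Real

noncomputable section

/-- `f` is L-good: at every point of the sphere and in every open semicircle of
tangent directions there is a direction whose great half-circle integrates `f`
negatively. -/
def LGood (f : E3 → ℝ) : Prop :=
  ∀ p ∈ sphere2, ∀ u : E3, UnitTangent p u →
    ∃ v : E3, UnitTangent p v ∧ 0 < ⟪u, v⟫ ∧ (∫ t in (0:ℝ)..π, f (geo p v t)) < 0

/-!
Extend `f` continuously to ℝ³ (Tietze), so that the half-circle integral `G (p, v)` becomes
jointly continuous in `(p, v)`. If `v` witnesses L-goodness at `(p, u)` with margin `ε`, then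
the unit vector obtained by projecting `v` to a nearby tangent plane `p'^⊥` still witnesses
margin `ε` at every nearby `(p', u')`. Compactness of the unit tangent bundle turns these
local margins into a uniform one.
-/

open Filter Topology

theorem IsCompact.exists_pos_forall_of_eventually {X : Type*} [TopologicalSpace X] {K : Set X}
    (hK : IsCompact K) {P : ℝ → X → Prop} (hP : Antitone P)
    (hloc : ∀ x ∈ K, ∃ ε > 0, ∀ᶠ y in 𝓝 x, y ∈ K → P ε y) :
    ∃ ε > 0, ∀ x ∈ K, P ε x := by
  set U : ℕ → Set X := fun n => {x | ∀ᶠ y in 𝓝 x, y ∈ K → P (1 / (n + 1)) y}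
  have hU_mono : Monotone U := fun m n hmn x hx =>
    hx.mono fun y hy hyK => hP (Nat.one_div_le_one_div hmn) y (hy hyK)
  have hKU : K ⊆ ⋃ n, U n := by
    intro x hx
    obtain ⟨ε, hε, hev⟩ := hloc x hx
    obtain ⟨n, hn⟩ := exists_nat_one_div_lt hε
    exact Set.mem_iUnion.2 ⟨n, hev.mono fun y hy hyK => hP hn.le y (hy hyK)⟩
  obtain ⟨n, hn⟩ := hK.elim_directed_cover U (fun _ => isOpen_setOfPred_eventually_nhds) hKU
    hU_mono.directed_le
  exact ⟨1 / (n + 1), Nat.one_div_pos_of_nat, fun x hx => (hn hx).self_of_nhds hx⟩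

def unitTangentBundle : Set (E3 × E3) := {z | z.1 ∈ sphere2 ∧ UnitTangent z.1 z.2}

theorem isCompact_unitTangentBundle : IsCompact unitTangentBundle := by
  have hS : IsCompact (Metric.sphere (0 : E3) 1) := isCompact_sphere 0 1
  convert (hS.prod hS).inter_right
    (isClosed_eq (continuous_fst.inner (𝕜 := ℝ) continuous_snd) (continuous_const (y := 0))) using 1
  ext ⟨p, v⟩
  simp [unitTangentBundle, sphere2, UnitTangent, and_assoc]

theorem geo_mem_sphere2 {p v : E3} (hp : p ∈ sphere2) (hv : UnitTangent p v) (t : ℝ) :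
    geo p v t ∈ sphere2 := by
  have hp : ‖p‖ = 1 := hp
  have hsq : ‖geo p v t‖ ^ 2 = 1 := by
    rw [sq, geo, norm_add_sq_eq_norm_sq_add_norm_sq_real, norm_smul, norm_smul, hp, hv.1]
    · simp only [Real.norm_eq_abs, mul_one, ← sq, sq_abs, cos_sq_add_sin_sq]
    · simp [real_inner_smul_left, real_inner_smul_right, hv.2]
  exact (pow_eq_one_iff_of_nonneg (norm_nonneg _) two_ne_zero).1 hsq

theorem exists_continuous_eq_integral_geo {f : E3 → ℝ} (hf : ContinuousOn f sphere2) :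
    ∃ G : E3 × E3 → ℝ, Continuous G ∧ ∀ p ∈ sphere2, ∀ v, UnitTangent p v →
      G (p, v) = ∫ t in (0:ℝ)..π, f (geo p v t) := by
  obtain ⟨g, hg⟩ := ContinuousMap.exists_restrict_eq (Y := ℝ)
    (isClosed_eq continuous_norm continuous_const) ⟨sphere2.domRestrict f, hf.domRestrict⟩
  refine ⟨fun z => ∫ t in (0:ℝ)..π, g (geo z.1 z.2 t), by unfold geo; fun_prop, ?_⟩
  intro p hp v hv
  refine intervalIntegral.integral_congr fun t _ => ?_
  exact ContinuousMap.congr_fun hg ⟨_, geo_mem_sphere2 hp hv t⟩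

def tangentDir (q v : E3) : E3 := ‖v - ⟪q, v⟫ • q‖⁻¹ • (v - ⟪q, v⟫ • q)

section tangentDir

variable {p v : E3}

theorem continuous_sub_inner_smul (v : E3) : Continuous fun q : E3 => v - ⟪q, v⟫ • q := by
  fun_prop

theorem tangentDir_eq_self (hv : UnitTangent p v) : tangentDir p v = v := by
  simp [tangentDir, hv.1, hv.2]

theorem continuousAt_tangentDir (hv : UnitTangent p v) : ContinuousAt (tangentDir · v) p := by
  have hw := continuous_sub_inner_smul v
  refine (hw.norm.continuousAt.inv₀ ?_).smul hw.continuousAt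
  simp [hv.1, hv.2]

theorem eventually_unitTangent_tangentDir (hv : UnitTangent p v) :
    ∀ᶠ q in 𝓝 p, ‖q‖ = 1 → UnitTangent q (tangentDir q v) := by
  have hne : ∀ᶠ q in 𝓝 p, v - ⟪q, v⟫ • q ≠ 0 :=
    (continuous_sub_inner_smul v).continuousAt.eventually_ne
      (by simpa [hv.2] using ne_zero_of_norm_ne_zero (hv.1.trans_ne one_ne_zero))
  filter_upwards [hne] with q hq hq1
  refine ⟨norm_smul_inv_norm hq, ?_⟩
  rw [tangentDir, real_inner_smul_right, inner_sub_right, real_inner_smul_right,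
    real_inner_self_eq_norm_sq, hq1]
  ring

end tangentDir

def HasNegDir (G : E3 × E3 → ℝ) (ε : ℝ) (z : E3 × E3) : Prop :=
  ∃ v, UnitTangent z.1 v ∧ 0 < ⟪z.2, v⟫ ∧ G (z.1, v) < -ε

theorem antitone_hasNegDir (G : E3 × E3 → ℝ) : Antitone (HasNegDir G) :=
  fun _ _ hε _ ⟨v, hv, huv, hGv⟩ => ⟨v, hv, huv, by linarith⟩

theorem HasNegDir.eventually {G : E3 × E3 → ℝ} (hG : Continuous G) {ε : ℝ} {z : E3 × E3}
    (h : HasNegDir G ε z) : ∀ᶠ z' in 𝓝 z, ‖z'.1‖ = 1 → HasNegDir G ε z' := by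
  obtain ⟨v, hv, huv, hGv⟩ := h
  have hw : ContinuousAt (fun z' : E3 × E3 => tangentDir z'.1 v) z :=
    (continuousAt_tangentDir hv).comp continuous_fst.continuousAt
  have hpos : ∀ᶠ z' in 𝓝 z, 0 < ⟪z'.2, tangentDir z'.1 v⟫ :=
    continuousAt_const.eventually_lt (continuous_snd.continuousAt.inner hw)
      (by rwa [tangentDir_eq_self hv])
  have hneg : ∀ᶠ z' in 𝓝 z, G (z'.1, tangentDir z'.1 v) < -ε :=
    (hG.continuousAt.comp (continuous_fst.continuousAt.prodMk hw)).eventually_lt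
      continuousAt_const (by simpa [tangentDir_eq_self hv] using hGv)
  filter_upwards [continuous_fst.continuousAt.eventually (eventually_unitTangent_tangentDir hv),
    hpos, hneg] with z' hunit hpos hneg hz'
  exact ⟨tangentDir z'.1 v, hunit hz', hpos, hneg⟩

theorem lgood_uniform_general (f : E3 → ℝ) (hf : ContinuousOn f sphere2)
    (hgood : LGood f) :
    ∃ ν > (0:ℝ), ∀ p ∈ sphere2, ∀ u : E3, UnitTangent p u →
      ∃ v : E3, UnitTangent p v ∧ 0 < ⟪u, v⟫ ∧
        (∫ t in (0:ℝ)..π, f (geo p v t)) < -ν := by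
  obtain ⟨G, hG, hGf⟩ := exists_continuous_eq_integral_geo hf
  have hloc : ∀ z ∈ unitTangentBundle, ∃ ε > 0, ∀ᶠ z' in 𝓝 z,
      z' ∈ unitTangentBundle → HasNegDir G ε z' := by
    rintro ⟨p, u⟩ ⟨hp, hu⟩
    obtain ⟨v, hv, huv, hneg⟩ := hgood p hp u hu
    rw [← hGf p hp v hv] at hneg
    refine ⟨-G (p, v) / 2, by linarith, ?_⟩
    exact (HasNegDir.eventually hG ⟨v, hv, huv, by linarith⟩).mono fun z' h hz' => h hz'.1
  obtain ⟨ν, hν, hνK⟩ :=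
    isCompact_unitTangentBundle.exists_pos_forall_of_eventually (antitone_hasNegDir G) hloc
  refine ⟨ν, hν, fun p hp u hu => ?_⟩
  obtain ⟨v, hv, huv, hGv⟩ := hνK (p, u) ⟨hp, hu⟩
  exact ⟨v, hv, huv, hGf p hp v hv ▸ hGv⟩

/-- For a continuous odd L-good function `f`, the negativity of the integrals
over great half-circles is uniform: there is a `ν > 0` working at all points
and all semicircles of directions. -/
theorem lgood_uniform (f : E3 → ℝ) (hf : ContinuousOn f sphere2)
    (hodd : ∀ x ∈ sphere2, f (-x) = -f x) (hgood : LGood f) :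
    ∃ ν > (0:ℝ), ∀ p ∈ sphere2, ∀ u : E3, UnitTangent p u →
      ∃ v : E3, UnitTangent p v ∧ 0 < ⟪u, v⟫ ∧
        (∫ t in (0:ℝ)..π, f (geo p v t)) < -ν :=
  lgood_uniform_general f hf hgood
end
end

section
/- Let Φ : ℝ × ℝ³ → ℝ be C^∞ with Φ(t,x) > 0 for all t ∈ ℝ, x ∈ S², and Φ(0,x) = 1 for all x ∈ S², and suppose the function f : S² → ℝ, f(x) = ∂Φ/∂t(0,x), is odd and L-good. Then there exists δ > 0 such that for every t ∈ (0,δ) and all p, q ∈ S² there exists m ∈ S² with 0 < ρ(p,m) < π and 0 < ρ(m,q) < π such that ∫₀^{ρ(p,m)} √(Φ(t, c_{p,m}(s))) ds + ∫₀^{ρ(m,q)} √(Φ(t, c_{m,q}(s))) ds < π. In particular, the diameter of the conformal metric g_t = Φ(t,·)·g₀ on S² is strictly less than π. -/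
open scoped RealInnerProductSpace
open Real

set_option maxHeartbeats 1000000
noncomputable section

/-- The minimizing great-circle arc from `x` to `y` (for `0 < ρ(x,y) < π`):
`c_{x,y}(t) = (sin(ρ(x,y) − t)·x + sin(t)·y) / sin(ρ(x,y))`. -/
def arcPath (x y : E3) (t : ℝ) : E3 :=
  (Real.sin (rho x y - t) / Real.sin (rho x y)) • x +
    (Real.sin t / Real.sin (rho x y)) • y

/-- `I_h(x,y) = ∫₀^{ρ(x,y)} h(c_{x,y}(t)) dt`. -/
def Iint (h : E3 → ℝ) (x y : E3) : ℝ :=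
  ∫ t in (0:ℝ)..(rho x y), h (arcPath x y t)
namespace DD


lemma inner_le_one {p q : E3} (hp : ‖p‖ = 1) (hq : ‖q‖ = 1) : ⟪p, q⟫ ≤ 1 := by
  have := real_inner_le_norm p q; rw [hp, hq] at this; linarith

lemma neg_one_le_inner {p q : E3} (hp : ‖p‖ = 1) (hq : ‖q‖ = 1) : -1 ≤ ⟪p, q⟫ := by
  have h := abs_real_inner_le_norm p q; rw [hp, hq] at h
  have h2 := neg_abs_le (⟪p, q⟫ : ℝ); linarith

lemma cos_rho {p q : E3} (hp : ‖p‖ = 1) (hq : ‖q‖ = 1) : Real.cos (rho p q) = ⟪p, q⟫ :=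
  Real.cos_arccos (neg_one_le_inner hp hq) (inner_le_one hp hq)

lemma rho_nonneg (p q : E3) : 0 ≤ rho p q := Real.arccos_nonneg _
lemma rho_le_pi (p q : E3) : rho p q ≤ π := Real.arccos_le_pi _

lemma rho_lt_pi {p q : E3} (h : -1 < ⟪p, q⟫) : rho p q < π := by
  rcases lt_or_eq_of_le (Real.arccos_le_pi (⟪p, q⟫ : ℝ)) with h' | h'
  · exact h'
  · exact absurd (Real.arccos_eq_pi.mp h') (by linarith)

lemma rho_pos {p q : E3} (h : ⟪p, q⟫ < 1) : 0 < rho p q := Real.arccos_pos.mpr h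

lemma norm_comb_sq {x y : E3} (a b : ℝ) (hx : ‖x‖ = 1) (hy : ‖y‖ = 1) :
    ‖a • x + b • y‖ ^ 2 = a ^ 2 + b ^ 2 + 2 * a * b * ⟪x, y⟫ := by
  rw [norm_add_sq_real, norm_smul, norm_smul, real_inner_smul_left, real_inner_smul_right,
    hx, hy]
  simp [mul_pow, sq_abs]; ring

lemma norm_eq_one_of_sq {z : E3} (h : ‖z‖ ^ 2 = 1) : ‖z‖ = 1 := by
  nlinarith [norm_nonneg z]

lemma geo_norm {p v : E3} (hp : ‖p‖ = 1) (hv : ‖v‖ = 1) (hpv : ⟪p, v⟫ = 0) (t : ℝ) :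
    ‖geo p v t‖ = 1 := by
  apply norm_eq_one_of_sq
  rw [geo, norm_comb_sq _ _ hp hv, hpv]
  nlinarith [Real.sin_sq_add_cos_sq t]

lemma sin_rho_pos {p q : E3} (h1 : -1 < ⟪p, q⟫) (h2 : ⟪p, q⟫ < 1) : 0 < Real.sin (rho p q) :=
  Real.sin_pos_of_pos_of_lt_pi (rho_pos h2) (rho_lt_pi h1)

lemma arcPath_norm {x y : E3} (hx : ‖x‖ = 1) (hy : ‖y‖ = 1) (h1 : -1 < ⟪x, y⟫)
    (h2 : ⟪x, y⟫ < 1) (s : ℝ) : ‖arcPath x y s‖ = 1 := by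
  have hs := sin_rho_pos h1 h2
  have hc : Real.cos (rho x y) = ⟪x, y⟫ := cos_rho hx hy
  apply norm_eq_one_of_sq
  rw [arcPath, norm_comb_sq _ _ hx hy, ← hc]
  have hss : Real.sin (rho x y) ≠ 0 := ne_of_gt hs
  field_simp
  rw [Real.sin_sub]
  linear_combination (Real.sin (rho x y)) ^ 2 * (Real.sin_sq_add_cos_sq s) -
    (Real.sin s) ^ 2 * (Real.sin_sq_add_cos_sq (rho x y))

lemma arcPath_inner_left {x y : E3} (hx : ‖x‖ = 1) (hy : ‖y‖ = 1) (h1 : -1 < ⟪x, y⟫)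
    (h2 : ⟪x, y⟫ < 1) (s : ℝ) : ⟪x, arcPath x y s⟫ = Real.cos s := by
  have hs := sin_rho_pos h1 h2
  have hc : Real.cos (rho x y) = ⟪x, y⟫ := cos_rho hx hy
  have hx2 : ⟪x, x⟫ = 1 := by
    rw [real_inner_self_eq_norm_sq, hx]; norm_num
  rw [arcPath, inner_add_right, real_inner_smul_right, real_inner_smul_right, hx2, ← hc]
  have hss : Real.sin (rho x y) ≠ 0 := ne_of_gt hs
  field_simp
  rw [Real.sin_sub]; ring

lemma arcPath_inner_right {x y : E3} (hx : ‖x‖ = 1) (hy : ‖y‖ = 1) (h1 : -1 < ⟪x, y⟫)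
    (h2 : ⟪x, y⟫ < 1) (s : ℝ) : ⟪arcPath x y s, y⟫ = Real.cos (rho x y - s) := by
  have hs := sin_rho_pos h1 h2
  have hc : Real.cos (rho x y) = ⟪x, y⟫ := cos_rho hx hy
  have hy2 : ⟪y, y⟫ = 1 := by
    rw [real_inner_self_eq_norm_sq, hy]; norm_num
  rw [arcPath, inner_add_left, real_inner_smul_left, real_inner_smul_left, hy2, ← hc]
  have hss : Real.sin (rho x y) ≠ 0 := ne_of_gt hs
  field_simp
  rw [Real.sin_sub, Real.cos_sub]
  linear_combination (-(Real.sin s)) * (Real.sin_sq_add_cos_sq (rho x y))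




lemma eq_neg_of_inner_eq_neg_one {p q : E3} (hp : ‖p‖ = 1) (hq : ‖q‖ = 1)
    (h : ⟪p, q⟫ = -1) : q = -p := by
  have h1 : ⟪p, -q⟫ = 1 := by rw [inner_neg_right, h]; norm_num
  have h2 : p = -q := (inner_eq_one_iff_of_norm_eq_one hp (by simpa using hq)).mp h1
  simp [h2]

lemma rho_orth {p v : E3} (h : ⟪p, v⟫ = 0) : rho p v = π / 2 := by
  rw [rho, h, Real.arccos_zero]

lemma arcPath_orth {p v : E3} (h : ⟪p, v⟫ = 0) (s : ℝ) : arcPath p v s = geo p v s := by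
  rw [arcPath, geo, rho_orth h]
  rw [Real.sin_pi_div_two, Real.sin_pi_div_two_sub]
  simp

lemma arcPath_orth_neg {p v : E3} (h : ⟪v, p⟫ = 0) (s : ℝ) :
    arcPath v (-p) s = geo p v (s + π / 2) := by
  have h2 : ⟪v, -p⟫ = 0 := by rw [inner_neg_right, h]; norm_num
  rw [arcPath, geo, rho_orth h2]
  rw [Real.sin_pi_div_two, Real.sin_pi_div_two_sub]
  rw [Real.cos_add_pi_div_two, Real.sin_add_pi_div_two]
  simp [smul_neg]
  abel

lemma exists_tangent (p : E3) (hp : ‖p‖ = 1) : ∃ w : E3, ‖w‖ = 1 ∧ ⟪p, w⟫ = 0 := by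
  have hp0 : p ≠ 0 := by intro h; rw [h] at hp; simp at hp
  obtain ⟨i, hi⟩ : ∃ i : Fin 3, p i ≠ 0 := by
    by_contra h; push_neg at h
    exact hp0 (by ext j; exact h j)
  set j : Fin 3 := i + 1 with hj
  have hij : j ≠ i := by fin_cases i <;> decide
  set z : E3 := (p i) • (EuclideanSpace.single j (1:ℝ)) - (p j) • (EuclideanSpace.single i (1:ℝ)) with hz
  have hzi : ⟪p, z⟫ = 0 := by
    rw [hz, inner_sub_right, real_inner_smul_right, real_inner_smul_right,
      EuclideanSpace.inner_single_right, EuclideanSpace.inner_single_right]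
    simp [mul_comm]
  have hz0 : z ≠ 0 := by
    intro h
    have := congrFun (congrArg (fun (v : E3) => (v : Fin 3 → ℝ)) h) j
    simp [hz, EuclideanSpace.single_apply, hij] at this
    exact hi this
  refine ⟨‖z‖⁻¹ • z, ?_, ?_⟩
  · rw [norm_smul, Real.norm_eq_abs, abs_of_nonneg (inv_nonneg.mpr (norm_nonneg z))]
    exact inv_mul_cancel₀ (norm_ne_zero_iff.mpr hz0)
  · rw [real_inner_smul_right, hzi]; ring




lemma deriv_slice (Φ : ℝ × E3 → ℝ) (hΦ : ContDiff ℝ (⊤ : ℕ∞) Φ) (x : E3) (s : ℝ) :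
    HasDerivAt (fun t => Φ (t, x)) ((fderiv ℝ Φ (s, x)) (1, 0)) s := by
  have h1 : HasFDerivAt Φ (fderiv ℝ Φ (s, x)) (s, x) :=
    (hΦ.differentiable (by simp) (s, x)).hasFDerivAt
  have h2 : HasDerivAt (fun t : ℝ => ((t, x) : ℝ × E3)) ((1 : ℝ), (0 : E3)) s :=
    (hasDerivAt_id s).prodMk (hasDerivAt_const s x)
  exact h1.comp_hasDerivAt s h2

lemma taylor_bound (Φ : ℝ × E3 → ℝ) (hΦ : ContDiff ℝ (⊤ : ℕ∞) Φ) :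
    ∃ C : ℝ, 0 ≤ C ∧ ∀ x : E3, ‖x‖ = 1 → ∀ t : ℝ, 0 ≤ t → t ≤ 1 →
      Φ (t, x) ≤ Φ (0, x) + t * (fderiv ℝ Φ (0, x)) (1, 0) + C * t ^ 2 := by
  set G : ℝ × E3 → ℝ := fun z => (fderiv ℝ Φ z) (1, 0) with hG
  have hGsm : ContDiff ℝ (⊤ : ℕ∞) G := ((hΦ.fderiv_right (m := (⊤ : ℕ∞)) (by simp)).clm_apply contDiff_const : ContDiff ℝ (⊤ : ℕ∞) _)
  set H : ℝ × E3 → ℝ := fun z => (fderiv ℝ G z) (1, 0) with hH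
  have hHc : Continuous H := (((hGsm.fderiv_right (m := (⊤ : ℕ∞)) (by simp)).clm_apply contDiff_const : ContDiff ℝ (⊤ : ℕ∞) _)).continuous
  have hderiv2 : ∀ (x : E3) (s : ℝ), HasDerivAt (fun t => G (t, x)) (H (s, x)) s :=
    fun x s => deriv_slice G hGsm x s
  obtain ⟨C₂, hC₂⟩ := (isCompact_Icc.prod (isCompact_sphere (0 : E3) 1)).exists_bound_of_continuousOn
    (s := Set.Icc (0:ℝ) 1 ×ˢ Metric.sphere (0 : E3) 1) hHc.continuousOn
  refine ⟨max C₂ 0, le_max_right _ _, ?_⟩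
  intro x hx t ht0 ht1
  set C := max C₂ 0 with hC
  have hbound : ∀ s ∈ Set.Icc (0:ℝ) 1, ‖H (s, x)‖ ≤ C := by
    intro s hs
    exact le_trans (hC₂ (s, x) ⟨hs, by simpa [Metric.mem_sphere] using hx⟩) (le_max_left _ _)
  have hstep : ∀ s ∈ Set.Icc (0:ℝ) 1, ‖G (s, x) - G (0, x)‖ ≤ C * (s - 0) := by
    apply norm_image_sub_le_of_norm_deriv_le_segment'
      (f := fun s => G (s, x)) (f' := fun s => H (s, x))
    · exact fun s _ => (hderiv2 x s).hasDerivWithinAt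
    · exact fun s hs => hbound s ⟨hs.1, hs.2.le⟩
  have hGc : Continuous fun s : ℝ => G (s, x) :=
    hGsm.continuous.comp (continuous_id.prodMk continuous_const)
  have hftc : ∫ s in (0:ℝ)..t, G (s, x) = Φ (t, x) - Φ (0, x) :=
    intervalIntegral.integral_eq_sub_of_hasDerivAt
      (fun s _ => deriv_slice Φ hΦ x s) (hGc.intervalIntegrable 0 t)
  have hmono : ∫ s in (0:ℝ)..t, G (s, x) ≤ ∫ s in (0:ℝ)..t, (G (0, x) + C * s) := by
    apply intervalIntegral.integral_mono_on ht0
    · exact hGc.intervalIntegrable 0 t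
    · exact (continuous_const.add (continuous_const.mul continuous_id)).intervalIntegrable 0 t
    · intro s hs
      have hs1 : s ∈ Set.Icc (0:ℝ) 1 := ⟨hs.1, le_trans hs.2 ht1⟩
      have := hstep s hs1
      rw [Real.norm_eq_abs] at this
      have := (abs_le.mp this).2
      linarith
  have hrhs : ∫ s in (0:ℝ)..t, (G (0, x) + C * s) = t * G (0, x) + C * (t ^ 2 / 2) := by
    have hint2 : IntervalIntegrable (fun s : ℝ => C * s) MeasureTheory.volume 0 t := by
      apply Continuous.intervalIntegrable; exact continuous_const.mul continuous_id'
    rw [intervalIntegral.integral_add (intervalIntegrable_const) hint2,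
      intervalIntegral.integral_const, intervalIntegral.integral_const_mul, integral_id]
    simp
  have hCt : C * (t ^ 2 / 2) ≤ C * t ^ 2 := by nlinarith [le_max_right C₂ 0]
  have : Φ (t, x) - Φ (0, x) ≤ t * G (0, x) + C * (t ^ 2 / 2) := by
    rw [← hftc]; linarith [hmono, hrhs.le]
  simp only [hG] at this
  linarith




lemma rho_pos' {p q : E3} (h : ⟪p, q⟫ < 1) : 0 < rho p q := Real.arccos_pos.mpr h
lemma rho_lt_pi' {p q : E3} (h : -1 < ⟪p, q⟫) : rho p q < π := by
  rcases lt_or_eq_of_le (Real.arccos_le_pi (⟪p, q⟫ : ℝ)) with h' | h'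
  · exact h'
  · exact absurd (Real.arccos_eq_pi.mp h') (by linarith)
lemma sin_rho_pos' {p q : E3} (h1 : -1 < ⟪p, q⟫) (h2 : ⟪p, q⟫ < 1) : 0 < Real.sin (rho p q) :=
  Real.sin_pos_of_pos_of_lt_pi (rho_pos' h2) (rho_lt_pi' h1)

lemma Iint_continuousOn (g : E3 → ℝ) (hg : Continuous g) :
    ContinuousOn (fun z : E3 × E3 => Iint g z.1 z.2)
      {z : E3 × E3 | -1 < ⟪z.1, z.2⟫ ∧ ⟪z.1, z.2⟫ < 1} := by
  set U : Set (E3 × E3) := {z : E3 × E3 | -1 < ⟪z.1, z.2⟫ ∧ ⟪z.1, z.2⟫ < 1} with hU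
  rw [continuousOn_iff_continuous_restrict]
  have hA : Continuous fun w : ↥U × ℝ => ((w.1 : E3 × E3)).1 :=
    (continuous_subtype_val.comp continuous_fst).fst
  have hB : Continuous fun w : ↥U × ℝ => ((w.1 : E3 × E3)).2 :=
    (continuous_subtype_val.comp continuous_fst).snd
  have hrho2 : Continuous fun w : ↥U × ℝ => rho ((w.1 : E3 × E3)).1 ((w.1 : E3 × E3)).2 :=
    Real.continuous_arccos.comp (hA.inner hB)
  have hsinrho : Continuous fun w : ↥U × ℝ =>
      Real.sin (rho ((w.1 : E3 × E3)).1 ((w.1 : E3 × E3)).2) := Real.continuous_sin.comp hrho2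
  have hne : ∀ w : ↥U × ℝ, Real.sin (rho ((w.1 : E3 × E3)).1 ((w.1 : E3 × E3)).2) ≠ 0 :=
    fun w => ne_of_gt (sin_rho_pos' w.1.prop.1 w.1.prop.2)
  have harc : Continuous fun w : ↥U × ℝ =>
      arcPath ((w.1 : E3 × E3)).1 ((w.1 : E3 × E3)).2 w.2 := by
    simp only [arcPath]
    apply Continuous.add
    · exact ((Real.continuous_sin.comp (hrho2.sub continuous_snd)).div hsinrho hne).smul hA
    · exact ((Real.continuous_sin.comp continuous_snd).div hsinrho hne).smul hB
  have hrho1 : Continuous fun z : ↥U => rho ((z : E3 × E3)).1 ((z : E3 × E3)).2 :=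
    Real.continuous_arccos.comp (continuous_subtype_val.fst.inner continuous_subtype_val.snd)
  exact intervalIntegral.continuous_parametric_intervalIntegral_of_continuous
    (f := fun (z : ↥U) (s : ℝ) => g (arcPath ((z : E3 × E3)).1 ((z : E3 × E3)).2 s))
    (hg.comp harc) hrho1


lemma chart (g : E3 → ℝ) (hg : Continuous g) (p₀ u₀ v₀ : E3)
    (hp₀ : ‖p₀‖ = 1) (hv₀ : ‖v₀‖ = 1) (hpv : ⟪p₀, v₀⟫ = 0)
    (huv : 0 < ⟪u₀, v₀⟫) (hneg : Iint g p₀ v₀ + Iint g v₀ (-p₀) < 0) :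
    ∃ ε > 0, ∃ c > 0, ∀ p w : E3, ‖p‖ = 1 → ‖p - p₀‖ < ε → ‖w - u₀‖ < ε →
      ∀ θ : ℝ, 0 ≤ θ → θ < ε → ∃ m : E3, ‖m‖ = 1 ∧ ⟪p, m⟫ = 0 ∧ 0 < ⟪w, m⟫ ∧
        Iint g p m + Iint g m (-Real.cos θ • p + Real.sin θ • w) < -c := by
  classical
  set U : Set (E3 × E3) := {z : E3 × E3 | -1 < ⟪z.1, z.2⟫ ∧ ⟪z.1, z.2⟫ < 1} with hUdef
  have hUopen : IsOpen U := by
    have hf : Continuous fun z : E3 × E3 => (⟪z.1, z.2⟫ : ℝ) := continuous_fst.inner continuous_snd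
    exact (isOpen_lt continuous_const hf).inter (isOpen_lt hf continuous_const)
  have hIc := Iint_continuousOn g hg
  set zf : E3 → E3 := fun p => v₀ - ⟪p, v₀⟫ • p with hzf
  have hz₀ : zf p₀ = v₀ := by
    rw [hzf]; simp only [hpv, zero_smul, sub_zero]
  set mf : E3 → E3 := fun p => ‖zf p‖⁻¹ • zf p with hmf
  have hm₀ : mf p₀ = v₀ := by
    rw [hmf]; simp only [hz₀, hv₀, inv_one, one_smul]
  set qf : E3 × E3 × ℝ → E3 := fun w => -Real.cos w.2.2 • w.1 + Real.sin w.2.2 • w.2.1 with hqf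
  set b₀ : E3 × E3 × ℝ := (p₀, u₀, (0:ℝ)) with hb₀
  have hq₀ : qf b₀ = -p₀ := by simp [hqf, hb₀]
  have hzc : Continuous zf := by
    exact continuous_const.sub ((continuous_id.inner continuous_const : Continuous fun p : E3 => ⟪p, v₀⟫).smul continuous_id)
  have hznorm : ContinuousAt (fun p => ‖zf p‖) p₀ := hzc.norm.continuousAt
  have hzn₀ : ‖zf p₀‖ = 1 := by rw [hz₀, hv₀]
  have hmc : ContinuousAt mf p₀ := by
    exact (hznorm.inv₀ (by rw [hzn₀]; norm_num)).smul hzc.continuousAt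
  have hqc : Continuous qf := by
    apply Continuous.add
    · exact ((Real.continuous_cos.comp continuous_snd.snd).neg).smul continuous_fst
    · exact (Real.continuous_sin.comp continuous_snd.snd).smul continuous_snd.fst
  have hvp : (⟪v₀, -p₀⟫ : ℝ) = 0 := by
    rw [inner_neg_right, real_inner_comm, hpv]; ring
  have hmem1 : ((p₀, v₀) : E3 × E3) ∈ U := by
    rw [hUdef]; constructor <;> (simp only [Set.mem_setOf_eq, hpv]; norm_num)
  have hmem2 : ((v₀, -p₀) : E3 × E3) ∈ U := by
    rw [hUdef]; constructor <;> (simp only [Set.mem_setOf_eq, hvp]; norm_num)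
  have hca1 : ContinuousAt (fun z : E3 × E3 => Iint g z.1 z.2) (p₀, v₀) :=
    hIc.continuousAt (hUopen.mem_nhds hmem1)
  have hca2 : ContinuousAt (fun z : E3 × E3 => Iint g z.1 z.2) (v₀, -p₀) :=
    hIc.continuousAt (hUopen.mem_nhds hmem2)
  have hin1 : ContinuousAt (fun w : E3 × E3 × ℝ => (w.1, mf w.1)) b₀ :=
    by
      have h := (ContinuousAt.comp (g := mf) (f := Prod.fst) (x := b₀) hmc continuous_fst.continuousAt : ContinuousAt (fun w : E3 × E3 × ℝ => mf w.1) b₀)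
      exact continuous_fst.continuousAt.prodMk h
  have hin2 : ContinuousAt (fun w : E3 × E3 × ℝ => (mf w.1, qf w)) b₀ :=
    (ContinuousAt.comp (g := mf) (f := Prod.fst) (x := b₀) hmc continuous_fst.continuousAt : ContinuousAt (fun w : E3 × E3 × ℝ => mf w.1) b₀).prodMk hqc.continuousAt
  have hΘ1 : ContinuousAt (fun w : E3 × E3 × ℝ => Iint g w.1 (mf w.1)) b₀ := by
    have : (fun w : E3 × E3 × ℝ => Iint g w.1 (mf w.1)) =
        (fun z : E3 × E3 => Iint g z.1 z.2) ∘ (fun w : E3 × E3 × ℝ => (w.1, mf w.1)) := rfl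
    rw [this]
    apply ContinuousAt.comp _ hin1
    simp only [hb₀, hm₀]
    exact hca1
  have hΘ2 : ContinuousAt (fun w : E3 × E3 × ℝ => Iint g (mf w.1) (qf w)) b₀ := by
    have : (fun w : E3 × E3 × ℝ => Iint g (mf w.1) (qf w)) =
        (fun z : E3 × E3 => Iint g z.1 z.2) ∘ (fun w : E3 × E3 × ℝ => (mf w.1, qf w)) := rfl
    rw [this]
    apply ContinuousAt.comp _ hin2
    simp only [hb₀, hm₀, hq₀]
    rw [← hb₀, hq₀]
    exact hca2
  have hΘc : ContinuousAt (fun w : E3 × E3 × ℝ => Iint g w.1 (mf w.1) + Iint g (mf w.1) (qf w)) b₀ :=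
    hΘ1.add hΘ2
  have hΞc : ContinuousAt (fun w : E3 × E3 × ℝ => (⟪w.2.1, mf w.1⟫ : ℝ)) b₀ :=
    ContinuousAt.inner (continuous_snd.fst.continuousAt) (ContinuousAt.comp (g := mf) (f := Prod.fst) (x := b₀) hmc continuous_fst.continuousAt)
  have hNc : ContinuousAt (fun w : E3 × E3 × ℝ => ‖zf w.1‖) b₀ :=
    ContinuousAt.comp (g := fun p => ‖zf p‖) (f := Prod.fst) (x := b₀) hznorm continuous_fst.continuousAt
  set c : ℝ := -(Iint g p₀ v₀ + Iint g v₀ (-p₀)) / 2 with hcdef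
  have hcpos : 0 < c := by rw [hcdef]; linarith
  have hΘval : (fun w : E3 × E3 × ℝ => Iint g w.1 (mf w.1) + Iint g (mf w.1) (qf w)) b₀ < -c := by
    simp only [hb₀, hm₀, hq₀]
    rw [← hb₀, hq₀]
    rw [hcdef]; linarith
  have h1 : ∀ᶠ w in nhds b₀,
      (Iint g w.1 (mf w.1) + Iint g (mf w.1) (qf w)) < -c :=
    hΘc.eventually_lt continuousAt_const hΘval
  have h2 : ∀ᶠ w in nhds b₀, (0:ℝ) < ⟪w.2.1, mf w.1⟫ := by
    apply continuousAt_const.eventually_lt hΞc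
    simp only [hb₀, hm₀]
    exact huv
  have h3 : ∀ᶠ w in nhds b₀, (1/2 : ℝ) < ‖zf w.1‖ := by
    apply continuousAt_const.eventually_lt hNc
    simp only [hb₀, hzn₀]
    norm_num
  obtain ⟨ε, hεpos, hε⟩ := Metric.eventually_nhds_iff.mp ((h1.and h2).and h3)
  refine ⟨ε, hεpos, c, hcpos, ?_⟩
  intro p w hp hpd hwd θ hθ0 hθε
  have hdist : dist ((p, w, θ) : E3 × E3 × ℝ) b₀ < ε := by
    rw [hb₀, Prod.dist_eq, Prod.dist_eq]
    apply max_lt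
    · rwa [dist_eq_norm]
    · apply max_lt
      · rwa [dist_eq_norm]
      · rw [Real.dist_eq, sub_zero, abs_of_nonneg hθ0]; exact hθε
  obtain ⟨⟨hP1, hP2⟩, hP3⟩ := hε hdist
  have hzne : zf p ≠ 0 := by
    intro h; rw [h] at hP3; simp at hP3; linarith
  refine ⟨mf p, ?_, ?_, hP2, hP1⟩
  · rw [hmf]
    simp only
    rw [norm_smul, Real.norm_eq_abs, abs_of_nonneg (inv_nonneg.mpr (norm_nonneg _))]
    exact inv_mul_cancel₀ (norm_ne_zero_iff.mpr hzne)
  · rw [hmf]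
    simp only
    rw [real_inner_smul_right, hzf]
    simp only
    rw [inner_sub_right, real_inner_smul_right, real_inner_self_eq_norm_sq, hp]
    simp



lemma numA (ρ1 ρ2 I1 I2 C M t η : ℝ) (hC : 0 ≤ C) (hM : 0 ≤ M) (ht0 : 0 < t) (ht1 : t ≤ 1)
    (hη : 0 < η) (hρ1 : 0 ≤ ρ1) (hρ2 : 0 ≤ ρ2) (hσ : ρ1 + ρ2 ≤ π - η)
    (hI1 : I1 ≤ M * ρ1) (hI2 : I2 ≤ M * ρ2) (hδ : t * (π * (M / 2 + C) + 1) < η) :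
    ρ1 * (1 + C * t ^ 2) + t / 2 * I1 + (ρ2 * (1 + C * t ^ 2) + t / 2 * I2) < π := by
  have h1 : t / 2 * I1 ≤ t / 2 * (M * ρ1) := mul_le_mul_of_nonneg_left hI1 (by linarith)
  have h2 : t / 2 * I2 ≤ t / 2 * (M * ρ2) := mul_le_mul_of_nonneg_left hI2 (by linarith)
  have ht2 : t ^ 2 ≤ t := by nlinarith
  have hpos : (0:ℝ) ≤ 1 + C * t ^ 2 + t / 2 * M := by nlinarith
  have hkey : (ρ1 + ρ2) * (1 + C * t ^ 2 + t / 2 * M) ≤ (π - η) * (1 + C * t ^ 2 + t / 2 * M) :=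
    mul_le_mul_of_nonneg_right hσ hpos
  have e0 : 0 ≤ C * t ^ 2 + t / 2 * M := by nlinarith
  have e1 : 0 ≤ η * (C * t ^ 2 + t / 2 * M) := mul_nonneg hη.le e0
  have e2 : π * (C * t ^ 2 + t / 2 * M) ≤ π * (C * t + t / 2 * M) := by
    have h3 : C * t ^ 2 ≤ C * t := mul_le_mul_of_nonneg_left ht2 hC
    exact mul_le_mul_of_nonneg_left (by linarith) Real.pi_pos.le
  have e4 : t * (π * (M / 2 + C)) < η := by nlinarith [mul_nonneg ht0.le (mul_nonneg Real.pi_pos.le (by linarith : (0:ℝ) ≤ M / 2 + C))]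
  have hfin : (π - η) * (1 + C * t ^ 2 + t / 2 * M) < π := by nlinarith [e1, e2, e4]
  nlinarith [hkey, hfin, h1, h2]

lemma numB (ρ1 ρ2 I1 I2 C t cB : ℝ) (hC : 0 ≤ C) (ht0 : 0 < t) (ht1 : t ≤ 1) (hcB : 0 < cB)
    (hρ1 : 0 ≤ ρ1) (hρ2 : 0 ≤ ρ2) (hσ : ρ1 + ρ2 ≤ π) (hI : I1 + I2 < -cB)
    (hδ : t * (2 * π * C + 1) < cB) :
    ρ1 * (1 + C * t ^ 2) + t / 2 * I1 + (ρ2 * (1 + C * t ^ 2) + t / 2 * I2) < π := by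
  have hx : (0:ℝ) ≤ 1 + C * t ^ 2 := by nlinarith
  have h1 : (ρ1 + ρ2) * (1 + C * t ^ 2) ≤ π * (1 + C * t ^ 2) := mul_le_mul_of_nonneg_right hσ hx
  have h2 : t / 2 * (I1 + I2) ≤ t / 2 * (-cB) := mul_le_mul_of_nonneg_left hI.le (by linarith)
  have h4 : π * C * t < cB / 2 := by nlinarith [mul_nonneg (mul_nonneg Real.pi_pos.le hC) ht0.le]
  have h5 : π * C * t ^ 2 < t * (cB / 2) := by nlinarith [mul_lt_mul_of_pos_left h4 ht0]
  nlinarith [h1, h2, h5]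

lemma caseA (p q : E3) (hp : ‖p‖ = 1) (hq : ‖q‖ = 1) (η : ℝ) (hη : 0 < η) (hηh : η ≤ 1/2)
    (hcase : rho p q ≤ π - η) :
    ∃ m : E3, ‖m‖ = 1 ∧ (0 < rho p m ∧ rho p m < π) ∧ (0 < rho m q ∧ rho m q < π) ∧
      (-1 < ⟪p, m⟫ ∧ ⟪p, m⟫ < 1) ∧ (-1 < ⟪m, q⟫ ∧ ⟪m, q⟫ < 1) ∧
      rho p m + rho m q ≤ π - η := by
  have hpqle : (⟪p, q⟫ : ℝ) ≤ 1 := inner_le_one hp hq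
  have hpqge : (-1 : ℝ) ≤ ⟪p, q⟫ := neg_one_le_inner hp hq
  by_cases hpq1 : (⟪p, q⟫ : ℝ) < 1
  · have hpq2 : (-1 : ℝ) < ⟪p, q⟫ := by
      rcases lt_or_eq_of_le hpqge with h | h
      · exact h
      · exfalso
        have h2 : rho p q = π := by rw [rho, ← h, Real.arccos_neg_one]
        rw [h2] at hcase; linarith
    set r : ℝ := rho p q with hrdef
    have hr0 : 0 < r := rho_pos hpq1
    have hrpi : r < π := rho_lt_pi hpq2
    set m : E3 := arcPath p q (r / 2) with hmdef
    have hm1 : ‖m‖ = 1 := arcPath_norm hp hq hpq2 hpq1 _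
    have hip : (⟪p, m⟫ : ℝ) = Real.cos (r / 2) := arcPath_inner_left hp hq hpq2 hpq1 _
    have hiq : (⟪m, q⟫ : ℝ) = Real.cos (r / 2) := by
      have h := arcPath_inner_right hp hq hpq2 hpq1 (r / 2)
      rw [h, ← hrdef]
      congr 1
      ring
    have hcos1 : Real.cos (r / 2) < 1 := by
      have := Real.strictAntiOn_cos (a := 0) (b := r / 2)
        ⟨le_rfl, Real.pi_pos.le⟩ ⟨by linarith, by linarith⟩ (by linarith)
      simpa using this
    have hcos0 : 0 < Real.cos (r / 2) :=
      Real.cos_pos_of_mem_Ioo ⟨by linarith, by linarith⟩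
    have hrpm : rho p m = r / 2 := by
      rw [rho, hip, Real.arccos_cos (by linarith) (by linarith)]
    have hrmq : rho m q = r / 2 := by
      rw [rho, hiq, Real.arccos_cos (by linarith) (by linarith)]
    refine ⟨m, hm1, ?_, ?_, ?_, ?_, ?_⟩
    · rw [hrpm]; constructor <;> linarith
    · rw [hrmq]; constructor <;> linarith
    · rw [hip]; constructor <;> linarith
    · rw [hiq]; constructor <;> linarith
    · rw [hrpm, hrmq]; linarith
  · push_neg at hpq1
    have hqp : q = p := by
      have h1 : (⟪p, q⟫ : ℝ) = 1 := le_antisymm hpqle hpq1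
      exact ((inner_eq_one_iff_of_norm_eq_one hp hq).mp h1).symm
    obtain ⟨w, hw1, hw2⟩ := exists_tangent p hp
    set m : E3 := geo p w (π / 4) with hmdef
    have hm1 : ‖m‖ = 1 := geo_norm hp hw1 hw2 _
    have hip : (⟪p, m⟫ : ℝ) = Real.cos (π / 4) := by
      rw [hmdef, geo, inner_add_right, real_inner_smul_right, real_inner_smul_right,
        real_inner_self_eq_norm_sq, hp, hw2]
      norm_num
    have hiq : (⟪m, q⟫ : ℝ) = Real.cos (π / 4) := by
      rw [hqp, real_inner_comm]; exact hip
    have hcos1 : Real.cos (π / 4) < 1 := by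
      have := Real.strictAntiOn_cos (a := 0) (b := π / 4)
        ⟨le_rfl, Real.pi_pos.le⟩ ⟨by linarith [Real.pi_pos], by linarith [Real.pi_pos]⟩
        (by linarith [Real.pi_pos])
      simpa using this
    have hcos0 : 0 < Real.cos (π / 4) :=
      Real.cos_pos_of_mem_Ioo ⟨by linarith [Real.pi_pos], by linarith [Real.pi_pos]⟩
    have hrpm : rho p m = π / 4 := by
      rw [rho, hip, Real.arccos_cos (by linarith [Real.pi_pos]) (by linarith [Real.pi_pos])]
    have hrmq : rho m q = π / 4 := by
      rw [rho, hiq, Real.arccos_cos (by linarith [Real.pi_pos]) (by linarith [Real.pi_pos])]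
    refine ⟨m, hm1, ?_, ?_, ?_, ?_, ?_⟩
    · rw [hrpm]; constructor <;> linarith [Real.pi_pos]
    · rw [hrmq]; constructor <;> linarith [Real.pi_pos]
    · rw [hip]; constructor <;> linarith
    · rw [hiq]; constructor <;> linarith
    · rw [hrpm, hrmq]; linarith [Real.pi_gt_three]

lemma caseB_w (p q : E3) (hp : ‖p‖ = 1) (hq : ‖q‖ = 1) (η : ℝ) (hη : 0 < η) (hηh : η ≤ 1/2)
    (hcase : π - η < rho p q) :
    ∃ w : E3, ‖w‖ = 1 ∧ ⟪p, w⟫ = 0 ∧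
      q = -Real.cos (π - rho p q) • p + Real.sin (π - rho p q) • w := by
  have hpqle : (⟪p, q⟫ : ℝ) ≤ 1 := inner_le_one hp hq
  have hpqge : (-1 : ℝ) ≤ ⟪p, q⟫ := neg_one_le_inner hp hq
  set θ : ℝ := π - rho p q with hθdef
  have hθ0 : 0 ≤ θ := by rw [hθdef]; linarith [rho_le_pi p q]
  have hθη : θ < η := by rw [hθdef]; linarith
  have hcosθ : (⟪p, q⟫ : ℝ) = -Real.cos θ := by
    have h1 : rho p q = π - θ := by rw [hθdef]; ring
    have h2 : Real.cos (rho p q) = ⟪p, q⟫ := cos_rho hp hq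
    rw [← h2, h1, Real.cos_pi_sub]
  by_cases hpq2 : (-1 : ℝ) < ⟪p, q⟫
  · have hθpos : 0 < θ := by
      rw [hθdef]
      have := rho_lt_pi hpq2
      linarith
    have hθlt : θ < π := by linarith [Real.pi_gt_three]
    have hsθ : 0 < Real.sin θ := Real.sin_pos_of_pos_of_lt_pi hθpos hθlt
    set w : E3 := (Real.sin θ)⁻¹ • (q + Real.cos θ • p) with hwdef
    have hnq : ‖q + Real.cos θ • p‖ = Real.sin θ := by
      have hsq2 : ‖q + Real.cos θ • p‖ ^ 2 = Real.sin θ ^ 2 := by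
        rw [norm_add_sq_real, norm_smul, real_inner_smul_right, hq, hp,
          real_inner_comm, hcosθ]
        simp [sq_abs]
        nlinarith [Real.sin_sq_add_cos_sq θ]
      nlinarith [norm_nonneg (q + Real.cos θ • p)]
    refine ⟨w, ?_, ?_, ?_⟩
    · rw [hwdef, norm_smul, Real.norm_eq_abs, abs_of_nonneg (inv_nonneg.mpr hsθ.le), hnq]
      exact inv_mul_cancel₀ (ne_of_gt hsθ)
    · rw [hwdef, real_inner_smul_right, inner_add_right, real_inner_smul_right,
        real_inner_self_eq_norm_sq, hp, hcosθ]
      simp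
    · rw [hwdef, smul_smul, mul_inv_cancel₀ (ne_of_gt hsθ), one_smul]
      module
  · have hpq3 : (⟪p, q⟫ : ℝ) = -1 := le_antisymm (by linarith [not_lt.mp hpq2]) hpqge
    have hθ0' : θ = 0 := by
      have h2 : rho p q = π := by rw [rho, hpq3, Real.arccos_neg_one]
      rw [hθdef, h2]; ring
    obtain ⟨w, hw1, hw2⟩ := exists_tangent p hp
    refine ⟨w, hw1, hw2, ?_⟩
    rw [hθ0', eq_neg_of_inner_eq_neg_one hp hq hpq3]
    simp

end DD

/-- If `Φ` is a smooth positive conformal factor with `Φ(0,·) = 1` whose first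
variation `f = ∂Φ/∂t(0,·)` is odd and L-good, then for all small `t > 0` any
two points of the sphere are joined by a broken round geodesic of two
minimizing arcs whose total `Φ(t,·)·g₀`-length is less than `π`; in particular
the diameter of the conformal metric `g_t = Φ(t,·)·g₀` is less than `π`. -/
theorem diameter_decreases_under_good_deformation
    (Φ : ℝ × E3 → ℝ) (hΦ : ContDiff ℝ (⊤ : ℕ∞) Φ)
    (hpos : ∀ t : ℝ, ∀ x ∈ sphere2, 0 < Φ (t, x))
    (h0 : ∀ x ∈ sphere2, Φ (0, x) = 1)
    (f : E3 → ℝ) (hf : ∀ x ∈ sphere2, f x = deriv (fun t => Φ (t, x)) 0)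
    (hodd : ∀ x ∈ sphere2, f (-x) = -f x) (hgood : LGood f) :
    ∃ δ > (0:ℝ), ∀ t : ℝ, 0 < t → t < δ → ∀ p ∈ sphere2, ∀ q ∈ sphere2,
      ∃ m ∈ sphere2, 0 < rho p m ∧ rho p m < π ∧ 0 < rho m q ∧ rho m q < π ∧
        (∫ s in (0:ℝ)..(rho p m), Real.sqrt (Φ (t, arcPath p m s))) +
          (∫ s in (0:ℝ)..(rho m q), Real.sqrt (Φ (t, arcPath m q s))) < π := by
  classical
  -- the first variation g, continuous on all of E3
  set g : E3 → ℝ := fun x => (fderiv ℝ Φ (0, x)) (1, 0) with hgdef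
  have hgc : Continuous g := by
    have h1 : Continuous fun z : ℝ × E3 => (fderiv ℝ Φ z) (1, 0) :=
      ((hΦ.fderiv_right (m := (⊤ : ℕ∞)) (by simp)).clm_apply contDiff_const : ContDiff ℝ (⊤ : ℕ∞) _).continuous
    exact h1.comp (continuous_const.prodMk continuous_id)
  have hfg : ∀ x : E3, ‖x‖ = 1 → f x = g x := by
    intro x hx
    rw [hf x hx, hgdef]
    exact (DD.deriv_slice Φ hΦ x 0).deriv
  -- Taylor bound and square-root bound
  obtain ⟨C, hC0, hTay⟩ := DD.taylor_bound Φ hΦ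
  have hsq : ∀ x : E3, ‖x‖ = 1 → ∀ t : ℝ, 0 ≤ t → t ≤ 1 →
      Real.sqrt (Φ (t, x)) ≤ (1 + C * t ^ 2) + t / 2 * g x := by
    intro x hx t ht0 ht1
    have hu : 0 < Φ (t, x) := hpos t x hx
    have h1 : Real.sqrt (Φ (t, x)) ≤ (1 + Φ (t, x)) / 2 := by
      nlinarith [Real.sq_sqrt hu.le, Real.sqrt_nonneg (Φ (t, x)),
        sq_nonneg (1 - Real.sqrt (Φ (t, x)))]
    have h2 := hTay x hx t ht0 ht1
    have h3 : Φ (0, x) = 1 := h0 x hx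
    have hct : C * t ^ 2 / 2 ≤ C * t ^ 2 := by nlinarith
    rw [h3] at h2
    calc Real.sqrt (Φ (t, x)) ≤ (1 + Φ (t, x)) / 2 := h1
      _ ≤ (1 + (1 + t * g x + C * t ^ 2)) / 2 := by linarith
      _ ≤ (1 + C * t ^ 2) + t / 2 * g x := by linarith
  -- uniform bound on g over the sphere
  obtain ⟨M₀, hM₀⟩ := (isCompact_sphere (0 : E3) 1).exists_bound_of_continuousOn hgc.continuousOn
  set M : ℝ := max M₀ 0 with hMdef
  have hM0 : 0 ≤ M := le_max_right _ _
  have hM : ∀ x : E3, ‖x‖ = 1 → |g x| ≤ M := by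
    intro x hx
    have := hM₀ x (by simpa [mem_sphere_iff_norm] using hx)
    rw [Real.norm_eq_abs] at this
    exact le_trans this (le_max_left _ _)
  -- continuity of arcPath in the parameter, and integrability
  have harcc : ∀ x y : E3, Continuous fun s : ℝ => arcPath x y s := by
    intro x y
    apply Continuous.add
    · exact ((Real.continuous_sin.comp (continuous_const.sub continuous_id)).div_const _).smul
        continuous_const
    · exact (Real.continuous_sin.div_const _).smul continuous_const
  have hsqc : ∀ (t : ℝ) (x y : E3), Continuous fun s : ℝ => Real.sqrt (Φ (t, arcPath x y s)) := by
    intro t x y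
    exact Real.continuous_sqrt.comp (hΦ.continuous.comp (continuous_const.prodMk (harcc x y)))
  -- the per-arc length bound
  have harc : ∀ x y : E3, ‖x‖ = 1 → ‖y‖ = 1 → -1 < ⟪x, y⟫ → ⟪x, y⟫ < 1 →
      ∀ t : ℝ, 0 ≤ t → t ≤ 1 →
      (∫ s in (0:ℝ)..(rho x y), Real.sqrt (Φ (t, arcPath x y s))) ≤
        rho x y * (1 + C * t ^ 2) + t / 2 * Iint g x y := by
    intro x y hx hy h1 h2 t ht0 ht1
    have hunit : ∀ s, ‖arcPath x y s‖ = 1 := DD.arcPath_norm hx hy h1 h2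
    have hint1 : IntervalIntegrable (fun s => Real.sqrt (Φ (t, arcPath x y s)))
        MeasureTheory.volume 0 (rho x y) := (hsqc t x y).intervalIntegrable 0 _
    have hgarc : Continuous fun s : ℝ => g (arcPath x y s) := hgc.comp (harcc x y)
    have hint2 : IntervalIntegrable (fun s => (1 + C * t ^ 2) + t / 2 * g (arcPath x y s))
        MeasureTheory.volume 0 (rho x y) :=
      (continuous_const.add (continuous_const.mul hgarc)).intervalIntegrable 0 _
    have hmono := intervalIntegral.integral_mono_on (DD.rho_nonneg x y) hint1 hint2
      (fun s _ => hsq _ (hunit s) t ht0 ht1)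
    have hrhs : (∫ s in (0:ℝ)..(rho x y), ((1 + C * t ^ 2) + t / 2 * g (arcPath x y s))) =
        rho x y * (1 + C * t ^ 2) + t / 2 * Iint g x y := by
      rw [intervalIntegral.integral_add (g := fun s => t / 2 * g (arcPath x y s)) intervalIntegrable_const
        ((continuous_const.mul hgarc : Continuous fun s => t / 2 * g (arcPath x y s)).intervalIntegrable 0 _),
        intervalIntegral.integral_const, intervalIntegral.integral_const_mul]
      rw [Iint]
      simp [smul_eq_mul]
    linarith [hmono, hrhs.le, hrhs.ge]
  -- bound on Iint by M
  have hIb : ∀ x y : E3, ‖x‖ = 1 → ‖y‖ = 1 → -1 < ⟪x, y⟫ → ⟪x, y⟫ < 1 →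
      |Iint g x y| ≤ M * rho x y := by
    intro x y hx hy h1 h2
    have hunit : ∀ s, ‖arcPath x y s‖ = 1 := DD.arcPath_norm hx hy h1 h2
    have := intervalIntegral.norm_integral_le_of_norm_le_const
      (f := fun s => g (arcPath x y s)) (C := M) (a := 0) (b := rho x y)
      (fun s _ => by rw [Real.norm_eq_abs]; exact hM _ (hunit s))
    rw [Real.norm_eq_abs] at this
    rw [Iint]
    calc |∫ s in (0:ℝ)..(rho x y), g (arcPath x y s)| ≤ M * |rho x y - 0| := this
      _ = M * rho x y := by rw [sub_zero, abs_of_nonneg (DD.rho_nonneg x y)]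
  -- chart data from L-goodness, for every unit tangent pair
  set K : Set (E3 × E3) := {z : E3 × E3 | ‖z.1‖ = 1 ∧ ‖z.2‖ = 1 ∧ ⟪z.1, z.2⟫ = 0} with hKdef
  have hKcpt : IsCompact K := by
    apply IsCompact.of_isClosed_subset
      ((isCompact_sphere (0 : E3) 1).prod (isCompact_sphere (0 : E3) 1))
    · have c1 : IsClosed {z : E3 × E3 | ‖z.1‖ = 1} :=
        isClosed_eq continuous_fst.norm continuous_const
      have c2 : IsClosed {z : E3 × E3 | ‖z.2‖ = 1} :=
        isClosed_eq continuous_snd.norm continuous_const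
      have c3 : IsClosed {z : E3 × E3 | (⟪z.1, z.2⟫ : ℝ) = 0} :=
        isClosed_eq (continuous_fst.inner continuous_snd) continuous_const
      exact (c1.inter (c2.inter c3))
    · rintro ⟨a, b⟩ ⟨ha, hb, -⟩
      exact ⟨by simpa [mem_sphere_iff_norm] using ha, by simpa [mem_sphere_iff_norm] using hb⟩
  have hchart : ∀ k : E3 × E3, k ∈ K → ∃ ε : ℝ, 0 < ε ∧ ∃ c : ℝ, 0 < c ∧
      ∀ p w : E3, ‖p‖ = 1 → ‖p - k.1‖ < ε → ‖w - k.2‖ < ε →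
      ∀ θ : ℝ, 0 ≤ θ → θ < ε → ∃ m : E3, ‖m‖ = 1 ∧ ⟪p, m⟫ = 0 ∧ 0 < ⟪w, m⟫ ∧
        Iint g p m + Iint g m (-Real.cos θ • p + Real.sin θ • w) < -c := by
    rintro ⟨p₀, u₀⟩ ⟨hk1, hk2, hk3⟩
    obtain ⟨v, ⟨hv1, hv2⟩, hvu, hIneg⟩ := hgood p₀ hk1 u₀ ⟨hk2, hk3⟩
    -- convert the half-circle integral to the two quarter-arc integrals
    have hgeo : ∀ s : ℝ, ‖geo p₀ v s‖ = 1 := DD.geo_norm hk1 hv1 hv2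
    have hIneg' : Iint g p₀ v + Iint g v (-p₀) < 0 := by
      have hfgeq : (∫ s in (0:ℝ)..π, f (geo p₀ v s)) = ∫ s in (0:ℝ)..π, g (geo p₀ v s) :=
        intervalIntegral.integral_congr (fun s _ => hfg _ (hgeo s))
      have hvp : (⟪v, p₀⟫ : ℝ) = 0 := by rw [real_inner_comm]; exact hv2
      have hvnp : (⟪v, -p₀⟫ : ℝ) = 0 := by rw [inner_neg_right, hvp]; ring
      have e1 : Iint g p₀ v = ∫ s in (0:ℝ)..(π/2), g (geo p₀ v s) := by
        rw [Iint, DD.rho_orth hv2]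
        exact intervalIntegral.integral_congr (fun s _ => by rw [DD.arcPath_orth hv2])
      have e2 : Iint g v (-p₀) = ∫ s in (0:ℝ)..(π/2), g (geo p₀ v (s + π/2)) := by
        rw [Iint, DD.rho_orth hvnp]
        exact intervalIntegral.integral_congr (fun s _ => by rw [DD.arcPath_orth_neg hvp])
      have e3 : (∫ s in (0:ℝ)..(π/2), g (geo p₀ v (s + π/2))) =
          ∫ s in (π/2:ℝ)..π, g (geo p₀ v s) := by
        have := intervalIntegral.integral_comp_add_right (a := (0:ℝ)) (b := (π/2:ℝ))
          (fun u => g (geo p₀ v u)) (π/2)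
        rw [this]
        norm_num
      have e4 : (∫ s in (0:ℝ)..(π/2), g (geo p₀ v s)) + (∫ s in (π/2:ℝ)..π, g (geo p₀ v s)) =
          ∫ s in (0:ℝ)..π, g (geo p₀ v s) := by
        apply intervalIntegral.integral_add_adjacent_intervals <;>
        · apply Continuous.intervalIntegrable
          exact hgc.comp (by
            apply Continuous.add
            · exact (Real.continuous_cos).smul continuous_const
            · exact (Real.continuous_sin).smul continuous_const)
      rw [e1, e2, e3, e4, ← hfgeq]
      exact hIneg
    exact DD.chart g hgc p₀ u₀ v hk1 hv1 hv2 hvu hIneg'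
  choose! ε hεpos c hcpos hch using hchart
  -- finite subcover
  have hcover : K ⊆ ⋃ k ∈ K, Metric.ball k (ε k) := by
    intro k hk
    exact Set.mem_biUnion hk (Metric.mem_ball_self (hεpos k hk))
  obtain ⟨T, hTsub, hTfin, hTcover⟩ :=
    hKcpt.elim_finite_subcover_image (fun k _ => Metric.isOpen_ball) hcover
  have hKne : K.Nonempty := by
    refine ⟨(EuclideanSpace.single 0 (1:ℝ), EuclideanSpace.single 1 (1:ℝ)), ?_, ?_, ?_⟩
    · simp [EuclideanSpace.norm_single]
    · simp [EuclideanSpace.norm_single]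
    · rw [EuclideanSpace.inner_single_right]
      simp [EuclideanSpace.single_apply]
  have hTne : T.Nonempty := by
    obtain ⟨k, hk⟩ := hKne
    obtain ⟨_, ⟨k', hk', rfl⟩, hmem⟩ := hTcover hk
    simp only [Set.mem_iUnion, exists_prop] at hmem
    exact ⟨k', hmem.1⟩
  set Tf := hTfin.toFinset with hTfdef
  have hTfne : Tf.Nonempty := by
    obtain ⟨k, hk⟩ := hTne
    exact ⟨k, hTfin.mem_toFinset.mpr hk⟩
  set η₀ : ℝ := Tf.inf' hTfne ε with hη₀
  set cB : ℝ := Tf.inf' hTfne c with hcB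
  have hη₀pos : 0 < η₀ := by
    rw [hη₀, Finset.lt_inf'_iff]
    exact fun k hk => hεpos k (hTsub (hTfin.mem_toFinset.mp hk))
  have hcBpos : 0 < cB := by
    rw [hcB, Finset.lt_inf'_iff]
    exact fun k hk => hcpos k (hTsub (hTfin.mem_toFinset.mp hk))
  set η : ℝ := min η₀ (1/2) with hηdef
  have hηpos : 0 < η := lt_min hη₀pos (by norm_num)
  have hηhalf : η ≤ 1/2 := min_le_right _ _
  -- the final δ
  set δA : ℝ := η / (π * (M / 2 + C) + 1) with hδA
  set δB : ℝ := cB / (2 * π * C + 1) with hδB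
  have hpiPos := Real.pi_pos
  have hδApos : 0 < δA := by
    apply div_pos hηpos
    nlinarith
  have hδBpos : 0 < δB := by
    apply div_pos hcBpos
    nlinarith
  clear_value g M K Tf η₀ cB
  refine ⟨min 1 (min δA δB), by positivity, ?_⟩
  intro t ht0 htδ p hp q hq
  have hp' : ‖p‖ = 1 := hp
  have hq' : ‖q‖ = 1 := hq
  have ht1 : t ≤ 1 := le_trans htδ.le (min_le_left _ _)
  have htA : t < δA := lt_of_lt_of_le htδ (le_trans (min_le_right _ _) (min_le_left _ _))
  have htB : t < δB := lt_of_lt_of_le htδ (le_trans (min_le_right _ _) (min_le_right _ _))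
  have hpqle : (⟪p, q⟫ : ℝ) ≤ 1 := DD.inner_le_one hp' hq'
  have hpqge : (-1 : ℝ) ≤ ⟪p, q⟫ := DD.neg_one_le_inner hp' hq'
  have hDApos : (0:ℝ) < π * (M / 2 + C) + 1 := by
    have h1 := mul_nonneg Real.pi_pos.le (show (0:ℝ) ≤ M / 2 + C by linarith only [hM0, hC0])
    linarith only [h1]
  have hDBpos : (0:ℝ) < 2 * π * C + 1 := by
    have h1 := mul_nonneg (mul_nonneg (by norm_num : (0:ℝ) ≤ 2) Real.pi_pos.le) hC0
    linarith only [h1]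
  by_cases hcase : rho p q ≤ π - η
  · -- Case A : p and q are not nearly antipodal
    obtain ⟨m, hm1, ⟨hrpm0, hrpmpi⟩, ⟨hrmq0, hrmqpi⟩, ⟨hipm1, hipm2⟩, ⟨himq1, himq2⟩, hσ⟩ :=
      DD.caseA p q hp' hq' η hηpos hηhalf hcase
    refine ⟨m, hm1, hrpm0, hrpmpi, hrmq0, hrmqpi, ?_⟩
    have hb1 := harc p m hp' hm1 hipm1 hipm2 t ht0.le ht1
    have hb2 := harc m q hm1 hq' himq1 himq2 t ht0.le ht1
    have hI1' := (abs_le.mp (hIb p m hp' hm1 hipm1 hipm2)).2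
    have hI2' := (abs_le.mp (hIb m q hm1 hq' himq1 himq2)).2
    have htA' : t * (π * (M / 2 + C) + 1) < η := by
      rw [hδA] at htA
      exact (lt_div_iff₀ hDApos).mp htA
    have hnum := DD.numA (rho p m) (rho m q) (Iint g p m) (Iint g m q) C M t η hC0 hM0 ht0 ht1
      hηpos (DD.rho_nonneg p m) (DD.rho_nonneg m q) hσ hI1' hI2' htA'
    linarith only [hb1, hb2, hnum]
  · -- Case B : nearly antipodal, use the chart cover
    push_neg at hcase
    obtain ⟨w, hw1, hw2, hqw⟩ := DD.caseB_w p q hp' hq' η hηpos hηhalf hcase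
    set θ : ℝ := π - rho p q with hθdef
    have hθ0 : 0 ≤ θ := by rw [hθdef]; linarith only [DD.rho_le_pi p q]
    have hθη : θ < η := by rw [hθdef]; linarith only [hcase]
    have hpwK : ((p, w) : E3 × E3) ∈ K := by rw [hKdef]; exact ⟨hp', hw1, hw2⟩
    obtain ⟨_, ⟨k, hkT, rfl⟩, hmem⟩ := hTcover hpwK
    simp only [Set.mem_iUnion, exists_prop] at hmem
    obtain ⟨hkT', hkball⟩ := hmem
    have hkK : k ∈ K := hTsub hkT'
    have hkTf : k ∈ Tf := by rw [hTfdef]; exact hTfin.mem_toFinset.mpr hkT'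
    have hdp : ‖p - k.1‖ < ε k := by
      have h1 : dist p k.1 ≤ dist ((p, w) : E3 × E3) k := by
        rw [Prod.dist_eq]; exact le_max_left _ _
      rw [dist_eq_norm] at h1
      exact lt_of_le_of_lt h1 hkball
    have hdw : ‖w - k.2‖ < ε k := by
      have h1 : dist w k.2 ≤ dist ((p, w) : E3 × E3) k := by
        rw [Prod.dist_eq]; exact le_max_right _ _
      rw [dist_eq_norm] at h1
      exact lt_of_le_of_lt h1 hkball
    have hηε : η₀ ≤ ε k := by rw [hη₀]; exact Finset.inf'_le _ hkTf
    have hθε : θ < ε k := by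
      have h2 : η ≤ η₀ := by rw [hηdef]; exact min_le_left _ _
      linarith only [hθη, hηε, h2]
    obtain ⟨m, hm1, hpm, hwm, hIsum⟩ := hch k hkK p w hp' hdp hdw θ hθ0 hθε
    rw [← hqw] at hIsum
    have hcBk : cB ≤ c k := by rw [hcB]; exact Finset.inf'_le _ hkTf
    have hIsum' : Iint g p m + Iint g m q < -cB := by linarith only [hIsum, hcBk]
    have hmp : (⟪m, p⟫ : ℝ) = 0 := by rw [real_inner_comm]; exact hpm
    have hθpi : θ ≤ π := by linarith only [hθη, hηhalf, Real.pi_gt_three]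
    have hsθ0 : 0 ≤ Real.sin θ := Real.sin_nonneg_of_nonneg_of_le_pi hθ0 hθpi
    have hsθ1 : Real.sin θ < 1 := by
      linarith only [Real.sin_le hθ0, hθη, hηhalf]
    have hwmle : (⟪m, w⟫ : ℝ) ≤ 1 := DD.inner_le_one hm1 hw1
    have hb : (⟪m, q⟫ : ℝ) = Real.sin θ * ⟪m, w⟫ := by
      rw [hqw, inner_add_right, real_inner_smul_right, real_inner_smul_right, hmp]
      ring
    have hb0 : 0 ≤ (⟪m, q⟫ : ℝ) := by
      rw [hb]
      exact mul_nonneg hsθ0 (by rw [real_inner_comm]; exact hwm.le)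
    have hb1 : (⟪m, q⟫ : ℝ) < 1 := by
      rw [hb]
      have h3 : Real.sin θ * ⟪m, w⟫ ≤ Real.sin θ * 1 := mul_le_mul_of_nonneg_left hwmle hsθ0
      linarith only [h3, hsθ1]
    have hrpm : rho p m = π / 2 := DD.rho_orth hpm
    have hrmq2 : rho m q ≤ π / 2 := by
      rw [rho]
      exact Real.arccos_le_pi_div_two.mpr hb0
    have hrmq0 : 0 < rho m q := DD.rho_pos hb1
    have hrmqpi : rho m q < π := DD.rho_lt_pi (by linarith only [hb0])
    refine ⟨m, hm1, ?_, ?_, hrmq0, hrmqpi, ?_⟩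
    · rw [hrpm]; linarith only [Real.pi_pos]
    · rw [hrpm]; linarith only [Real.pi_pos]
    have hbnd1 := harc p m hp' hm1 (by rw [hpm]; norm_num) (by rw [hpm]; norm_num) t ht0.le ht1
    have hbnd2 := harc m q hm1 hq' (by linarith only [hb0]) hb1 t ht0.le ht1
    have hσ : rho p m + rho m q ≤ π := by rw [hrpm]; linarith only [hrmq2]
    have htB' : t * (2 * π * C + 1) < cB := by
      rw [hδB] at htB
      exact (lt_div_iff₀ hDBpos).mp htB
    have hnum := DD.numB (rho p m) (rho m q) (Iint g p m) (Iint g m q) C t cB hC0 ht0 ht1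
      hcBpos (DD.rho_nonneg p m) (DD.rho_nonneg m q) hσ hIsum' htB'
    linarith only [hbnd1, hbnd2, hnum]
end
end

section
/- Let p ∈ S², 0 < ε < π/2, a ∈ S², b a unit tangent vector at a, and ℓ > 0, and suppose ρ(p, γ_{a,b}(t)) ≤ ε for all t ∈ [0,ℓ]. Then ∫₀^ℓ δ^ε_p(γ_{a,b}(t)) dt ≤ 2·∫₀^ε exp(1/ε)·exp(1/(s − ε)) ds (the right-hand side being the integral of δ^ε_p over any diameter of the geodesic ball B(p,ε)), with equality if and only if ℓ = 2ε, i.e., if and only if the arc is itself a diameter of B(p,ε). -/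
open scoped RealInnerProductSpace
open Real

noncomputable section

/-- The bump function `δ^ε_p`, supported in the geodesic ball `B(p,ε)`:
`δ^ε_p(q) = exp(1/ε)·exp(1/(ρ(p,q) − ε))` for `ρ(p,q) < ε`, and `0` otherwise. -/
def deltaFn (p : E3) (ε : ℝ) (q : E3) : ℝ :=
  if rho p q < ε then Real.exp (1 / ε) * Real.exp (1 / (rho p q - ε)) else 0

/-! Along the great circle, `⟪p, γ(t)⟫ = R cos (t - φ)` with `0 ≤ R ≤ 1` (polar form of
`(⟪a, p⟫, ⟪b, p⟫)`, bounded by Bessel's inequality): `R` is the cosine of the distance from `p`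
to the great circle and `γ(φ)` is the foot of the perpendicular. Staying in the ball forces
`|t - φ| ≤ ε` on `[0, ℓ]`, so `[0, ℓ] ⊆ [φ - ε, φ + ε]`, and spherical Pythagoras gives
`ρ(p, γ(t)) = arccos (R cos (t - φ)) ≥ |t - φ|`. As the radial profile of `δ^ε_p` is
antitone, the integral is at most that of the profile of `|t - φ|` over `[φ - ε, φ + ε]`,
which is the diameter integral. Equality forces `[0, ℓ] = [φ - ε, φ + ε]`; conversely
`ℓ = 2ε` forces `φ = ε` and `R = 1`, i.e. `p = γ(ε)`, and then both steps are equalities. -/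

open Set MeasureTheory intervalIntegral

lemma integral_comp_abs_sub {f : ℝ → ℝ} {r : ℝ} (hr : 0 ≤ r)
    (hf : IntervalIntegrable (fun s => f |s|) volume (-r) r) (c : ℝ) :
    ∫ t in (c - r)..(c + r), f |t - c| = 2 * ∫ s in (0 : ℝ)..r, f s := by
  have hpos : ∫ s in (0 : ℝ)..r, f |s| = ∫ s in (0 : ℝ)..r, f s :=
    integral_congr fun s hs => by
      rw [uIcc_of_le hr] at hs
      simp only [abs_of_nonneg hs.1]
  have hneg : ∫ s in (-r)..0, f |s| = ∫ s in (0 : ℝ)..r, f |s| := by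
    simpa using (integral_comp_neg (a := 0) (b := r) fun s => f |s|).symm
  rw [integral_comp_sub_right (fun s => f |s|), sub_sub_cancel_left, add_sub_cancel_left,
    ← integral_add_adjacent_intervals (b := 0)
      (hf.mono_set (uIcc_subset_uIcc_left (by simp [hr])))
      (hf.mono_set (uIcc_subset_uIcc_right (by simp [hr]))),
    hneg, hpos, two_mul]

lemma integral_lt_integral_of_length_lt {F : ℝ → ℝ} {a b u v : ℝ}
    (hFi : IntervalIntegrable F volume u v) (hF0 : ∀ t ∈ Icc u v, 0 ≤ F t)
    (hFpos : ∀ t ∈ Ioo u v, 0 < F t) (hua : u ≤ a) (hab : a ≤ b) (hbv : b ≤ v)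
    (hlen : b - a < v - u) :
    ∫ t in a..b, F t < ∫ t in u..v, F t := by
  have hi : ∀ {x y}, u ≤ x → x ≤ y → y ≤ v → IntervalIntegrable F volume x y := fun hx hxy hy =>
    hFi.mono_set <| by
      rw [uIcc_of_le hxy, uIcc_of_le (hx.trans (hxy.trans hy))]; exact Icc_subset_Icc hx hy
  have hgap : ∀ {x y}, u ≤ x → x ≤ y → y ≤ v → 0 ≤ ∫ t in x..y, F t := fun hx hxy hy =>
    integral_nonneg hxy fun t ht => hF0 t ⟨hx.trans ht.1, ht.2.trans hy⟩
  have hpos : ∀ {x y}, u ≤ x → x < y → y ≤ v → 0 < ∫ t in x..y, F t := fun hx hxy hy =>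
    intervalIntegral_pos_of_pos_on (hi hx hxy.le hy)
      (fun t ht => hFpos t ⟨hx.trans_lt ht.1, ht.2.trans_le hy⟩) hxy
  rw [← integral_add_adjacent_intervals (hi le_rfl hua (hab.trans hbv))
      (hi hua (hab.trans hbv) le_rfl),
    ← integral_add_adjacent_intervals (hi hua hab hbv) (hi (hua.trans hab) hbv le_rfl)]
  rcases hua.lt_or_eq with hua' | rfl
  · linarith [hpos le_rfl hua' (hab.trans hbv), hgap (hua.trans hab) hbv le_rfl]
  · linarith [hpos (hua.trans hab) (by linarith : b < v) le_rfl, hgap le_rfl le_rfl (hab.trans hbv)]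

lemma abs_le_of_cos_le_cos {x ε : ℝ} (hε : 0 ≤ ε) (hx : |x| ≤ π) (h : cos ε ≤ cos x) :
    |x| ≤ ε := by
  by_contra! hlt
  have := strictAntiOn_cos ⟨hε, hlt.le.trans hx⟩ ⟨abs_nonneg x, hx⟩ hlt
  rw [cos_abs] at this
  linarith

lemma abs_sub_le_of_forall_cos_le {ε φ ℓ : ℝ} (hε : 0 ≤ ε) (hεπ : ε < π) (hφ : |φ| ≤ π)
    (h : ∀ t ∈ Icc 0 ℓ, cos ε ≤ cos (t - φ)) : ∀ t ∈ Icc 0 ℓ, |t - φ| ≤ ε := by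
  intro t ht
  have hφε : |φ| ≤ ε := by
    refine abs_le_of_cos_le_cos hε hφ ?_
    simpa using h 0 ⟨le_rfl, ht.1.trans ht.2⟩
  by_contra! hlt
  have htφ : ε < t - φ :=
    (lt_abs.mp hlt).resolve_right fun h' => by linarith [ht.1, le_abs_self φ]
  -- Walk from `φ` towards `t` for at most `π`: the cosine must drop below `cos ε` on the way.
  set x := min (t - φ) π
  have hεx : ε < x := lt_min htφ hεπ
  have hxπ : |x| ≤ π := by rw [abs_of_pos (hε.trans_lt hεx)]; exact min_le_right _ _
  have hmem : φ + x ∈ Icc 0 ℓ :=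
    ⟨by linarith [neg_abs_le φ], by linarith [min_le_left (t - φ) π, ht.2]⟩
  have := abs_le_of_cos_le_cos hε hxπ (by simpa using h _ hmem)
  linarith [le_abs_self x]

lemma cos_le_of_arccos_le {y ε : ℝ} (hy₁ : -1 ≤ y) (hy₂ : y ≤ 1) (hε : ε ≤ π)
    (h : arccos y ≤ ε) : cos ε ≤ y := by
  rw [← cos_arccos hy₁ hy₂]
  exact cos_le_cos_of_nonneg_of_le_pi (arccos_nonneg _) hε h

lemma cos_le_mul_cos_of_arccos_le {R x ε : ℝ} (hR0 : 0 ≤ R) (hR1 : R ≤ 1) (hε : ε ≤ π)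
    (h : arccos (R * cos x) ≤ ε) : cos ε ≤ R * cos x := by
  have hRcos : |R * cos x| ≤ 1 := by
    rw [abs_mul, abs_of_nonneg hR0]
    exact mul_le_one₀ hR1 (abs_nonneg _) (abs_cos_le_one x)
  exact cos_le_of_arccos_le (abs_le.mp hRcos).1 (abs_le.mp hRcos).2 hε h

lemma cos_le_cos_of_arccos_mul_cos_le {R x ε : ℝ} (hR0 : 0 ≤ R) (hR1 : R ≤ 1)
    (hε : ε < π / 2) (h : arccos (R * cos x) ≤ ε) : cos ε ≤ cos x := by
  have hle := cos_le_mul_cos_of_arccos_le hR0 hR1 (by linarith [pi_pos]) h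
  have hcosε : 0 < cos ε :=
    cos_pos_of_mem_Ioo ⟨by linarith [pi_pos, (arccos_nonneg _).trans h], hε⟩
  have hcos : 0 < cos x := pos_of_mul_pos_right (hcosε.trans_le hle) hR0
  exact hle.trans (mul_le_of_le_one_left hcos.le hR1)

lemma abs_le_arccos_mul_cos {R x : ℝ} (hR1 : R ≤ 1) (hx : |x| ≤ π / 2) :
    |x| ≤ arccos (R * cos x) := by
  have hcos : 0 ≤ cos x := cos_nonneg_of_mem_Icc (abs_le.mp hx)
  calc |x| = arccos (cos x) := by
        rw [← cos_abs, arccos_cos (abs_nonneg x) (by linarith [pi_pos])]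
    _ ≤ arccos (R * cos x) := arccos_le_arccos (mul_le_of_le_one_left hcos hR1)

lemma sq_inner_add_sq_inner_le {F : Type*} [NormedAddCommGroup F] [InnerProductSpace ℝ F]
    {a b : F} (ha : ‖a‖ = 1) (hb : ‖b‖ = 1) (hab : ⟪a, b⟫ = 0) (p : F) :
    ⟪a, p⟫ ^ 2 + ⟪b, p⟫ ^ 2 ≤ ‖p‖ ^ 2 := by
  have hv : Orthonormal ℝ ![a, b] := by simp [ha, hb, hab]
  simpa using hv.sum_inner_products_le (x := p) (s := Finset.univ)

lemma exists_inner_geo_eq_mul_cos {a b : E3} (ha : a ∈ sphere2) (hb : UnitTangent a b)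
    (p : E3) :
    ∃ R φ : ℝ, 0 ≤ R ∧ R ≤ ‖p‖ ∧ |φ| ≤ π ∧ ∀ t, ⟪p, geo a b t⟫ = R * cos (t - φ) := by
  set z : ℂ := ⟪a, p⟫ + ⟪b, p⟫ * Complex.I
  refine ⟨‖z‖, Complex.arg z, norm_nonneg z, ?_, Complex.abs_arg_le_pi z, fun t => ?_⟩
  · rw [Complex.norm_add_mul_I]
    exact (Real.sqrt_le_left (norm_nonneg p)).mpr (sq_inner_add_sq_inner_le ha hb.1 hb.2 p)
  · rw [cos_sub, mul_add, ← mul_assoc, ← mul_assoc, mul_comm _ (cos t), mul_comm _ (sin t),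
      mul_assoc, mul_assoc, Complex.norm_mul_cos_arg, Complex.norm_mul_sin_arg]
    simp [z, geo, inner_add_right, real_inner_smul_right, real_inner_comm]

def deltaProfile (ε s : ℝ) : ℝ :=
  if s < ε then exp (1 / ε) * exp (1 / (s - ε)) else 0

lemma deltaFn_eq_deltaProfile (p : E3) (ε : ℝ) (q : E3) :
    deltaFn p ε q = deltaProfile ε (rho p q) := rfl

section deltaProfile

variable (ε : ℝ)

lemma deltaProfile_nonneg (s : ℝ) : 0 ≤ deltaProfile ε s := by
  unfold deltaProfile; split <;> positivity

lemma deltaProfile_pos {s : ℝ} (h : s < ε) : 0 < deltaProfile ε s := by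
  rw [deltaProfile, if_pos h]; positivity

lemma deltaProfile_le_exp (s : ℝ) : deltaProfile ε s ≤ exp (1 / ε) := by
  unfold deltaProfile
  split_ifs with h
  · have : 1 / (s - ε) ≤ 0 := one_div_nonpos.mpr (by linarith)
    exact mul_le_of_le_one_right (exp_nonneg _) (exp_le_one_iff.mpr this)
  · positivity

lemma antitone_deltaProfile : Antitone (deltaProfile ε) := by
  intro s₁ s₂ h
  unfold deltaProfile
  split_ifs with h₂ h₁ h₁
  · gcongr exp (1 / ε) * exp ?_
    exact one_div_le_one_div_of_neg_of_le (by linarith) (by linarith)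
  · exact absurd (h.trans_lt h₂) h₁
  · positivity
  · rfl

lemma measurable_deltaProfile : Measurable (deltaProfile ε) :=
  Measurable.ite measurableSet_Iio (by fun_prop) measurable_const

lemma intervalIntegrable_deltaProfile_comp {g : ℝ → ℝ} (hg : Continuous g) (u v : ℝ) :
    IntervalIntegrable (fun t => deltaProfile ε (g t)) volume u v := by
  refine (intervalIntegrable_const (c := exp (1 / ε))).mono_fun
    ((measurable_deltaProfile ε).comp hg.measurable).aestronglyMeasurable
    (Filter.Eventually.of_forall fun t => ?_)
  simpa [abs_of_nonneg (deltaProfile_nonneg ε _)] using deltaProfile_le_exp ε (g t)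

-- `deltaProfile ε` differs from the integrand on the right only at `s = ε`, where `1 / 0 = 0`.
lemma integral_deltaProfile (hε : 0 ≤ ε) :
    ∫ s in (0 : ℝ)..ε, deltaProfile ε s = ∫ s in (0 : ℝ)..ε, exp (1 / ε) * exp (1 / (s - ε)) := by
  rw [integral_of_le hε, integral_of_le hε, integral_Ioc_eq_integral_Ioo,
    integral_Ioc_eq_integral_Ioo]
  exact setIntegral_congr_fun measurableSet_Ioo fun s hs => if_pos hs.2

end deltaProfile

lemma integral_deltaProfile_abs_sub {ε φ ℓ : ℝ} (hε : 0 < ε) (hlo : φ - ε ≤ 0) (hℓ : 0 ≤ ℓ)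
    (hhi : ℓ ≤ φ + ε) :
    ∫ t in (0 : ℝ)..ℓ, deltaProfile ε |t - φ| ≤ 2 * ∫ s in (0 : ℝ)..ε, deltaProfile ε s ∧
      (∫ t in (0 : ℝ)..ℓ, deltaProfile ε |t - φ| = 2 * ∫ s in (0 : ℝ)..ε, deltaProfile ε s ↔
        ℓ = 2 * ε) := by
  have hFi : IntervalIntegrable (fun t => deltaProfile ε |t - φ|) volume (φ - ε) (φ + ε) :=
    intervalIntegrable_deltaProfile_comp ε (by fun_prop) _ _
  rw [← integral_comp_abs_sub hε.le (intervalIntegrable_deltaProfile_comp ε continuous_abs _ _) φ]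
  refine ⟨integral_mono_interval hlo hℓ hhi
      (Filter.Eventually.of_forall fun t => deltaProfile_nonneg ε _) hFi,
    fun heq => ?_, fun h2ε => ?_⟩
  · by_contra hne
    have hlt : ℓ < 2 * ε := lt_of_le_of_ne (by linarith) hne
    refine (integral_lt_integral_of_length_lt hFi (fun t _ => deltaProfile_nonneg ε _)
      (fun t ht => deltaProfile_pos ε (abs_lt.mpr ⟨by linarith [ht.1], by linarith [ht.2]⟩))
      hlo hℓ hhi (by linarith)).ne heq
  · obtain rfl : φ = ε := by linarith
    rw [sub_self, ← two_mul, h2ε]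

theorem integral_deltaProfile_arccos_mul_cos {ε R φ ℓ : ℝ} (hε : 0 < ε) (hε' : ε < π / 2)
    (hR0 : 0 ≤ R) (hR1 : R ≤ 1) (hφ : |φ| ≤ π) (hℓ : 0 ≤ ℓ)
    (hin : ∀ t ∈ Icc 0 ℓ, arccos (R * cos (t - φ)) ≤ ε) :
    ∫ t in (0 : ℝ)..ℓ, deltaProfile ε (arccos (R * cos (t - φ))) ≤
        2 * ∫ s in (0 : ℝ)..ε, deltaProfile ε s ∧
      (∫ t in (0 : ℝ)..ℓ, deltaProfile ε (arccos (R * cos (t - φ))) =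
          2 * ∫ s in (0 : ℝ)..ε, deltaProfile ε s ↔ ℓ = 2 * ε) := by
  have hconf : ∀ t ∈ Icc 0 ℓ, |t - φ| ≤ ε :=
    abs_sub_le_of_forall_cos_le hε.le (by linarith [pi_pos]) hφ
      fun t ht => cos_le_cos_of_arccos_mul_cos_le hR0 hR1 hε' (hin t ht)
  have hlo : φ - ε ≤ 0 := by linarith [(abs_le.mp (hconf 0 ⟨le_rfl, hℓ⟩)).1]
  have hhi : ℓ ≤ φ + ε := by linarith [(abs_le.mp (hconf ℓ ⟨hℓ, le_rfl⟩)).2]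
  obtain ⟨hle, hiff⟩ := integral_deltaProfile_abs_sub hε hlo hℓ hhi
  have hGF : ∫ t in (0 : ℝ)..ℓ, deltaProfile ε (arccos (R * cos (t - φ))) ≤
      ∫ t in (0 : ℝ)..ℓ, deltaProfile ε |t - φ| :=
    integral_mono_on hℓ (intervalIntegrable_deltaProfile_comp ε (by fun_prop) _ _)
      (intervalIntegrable_deltaProfile_comp ε (by fun_prop) _ _)
      fun t ht => antitone_deltaProfile ε
        (abs_le_arccos_mul_cos hR1 ((hconf t ht).trans (by linarith)))
  refine ⟨hGF.trans hle, fun heq => hiff.mp (hle.antisymm (heq ▸ hGF)), fun h2ε => ?_⟩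
  -- `γ(0)` lies within `ε` of `p` but at distance `ε` from the foot `γ(ε)`, so `p` is the foot.
  have hR : R = 1 := by
    have hφε : φ = ε := by linarith
    have := cos_le_mul_cos_of_arccos_le hR0 hR1 (by linarith) (hin 0 ⟨le_rfl, hℓ⟩)
    rw [zero_sub, cos_neg, hφε] at this
    nlinarith [cos_pos_of_mem_Ioo ⟨by linarith, hε'⟩]
  rw [← hiff.mpr h2ε]
  refine integral_congr fun t ht => ?_
  rw [uIcc_of_le hℓ] at ht
  simp only [hR, one_mul, ← cos_abs (t - φ)]
  rw [arccos_cos (abs_nonneg _) ((hconf t ht).trans (by linarith))]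

/-- The integral of `δ^ε_p` over a geodesic arc contained in the closed ball
`B(p,ε)` is at most its integral over a diameter of `B(p,ε)`, with equality if
and only if the arc is itself a diameter (i.e. has length `2ε`). -/
theorem deltaFn_integral_le_diameter
    (p : E3) (hp : p ∈ sphere2) (ε : ℝ) (hε : 0 < ε) (hε' : ε < π / 2)
    (a b : E3) (ha : a ∈ sphere2) (hb : UnitTangent a b)
    (ℓ : ℝ) (hℓ : 0 < ℓ)
    (hin : ∀ t ∈ Set.Icc (0:ℝ) ℓ, rho p (geo a b t) ≤ ε) :
    (∫ t in (0:ℝ)..ℓ, deltaFn p ε (geo a b t)) ≤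
        2 * ∫ s in (0:ℝ)..ε, Real.exp (1 / ε) * Real.exp (1 / (s - ε)) ∧
      ((∫ t in (0:ℝ)..ℓ, deltaFn p ε (geo a b t)) =
          2 * ∫ s in (0:ℝ)..ε, Real.exp (1 / ε) * Real.exp (1 / (s - ε)) ↔
        ℓ = 2 * ε) := by
  obtain ⟨R, φ, hR0, hR1, hφ, hinner⟩ := exists_inner_geo_eq_mul_cos ha hb p
  have hrho : ∀ t, rho p (geo a b t) = arccos (R * cos (t - φ)) := fun t => by
    rw [rho, hinner]
  simp_rw [deltaFn_eq_deltaProfile, hrho, ← integral_deltaProfile ε hε.le]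
  exact integral_deltaProfile_arccos_mul_cos hε hε' hR0 (hR1.trans_eq hp) hφ hℓ.le
    fun t ht => hrho t ▸ hin t ht
end
end

section
/- Let S ⊆ S² be a fine set. Then for every p ∈ S² and every unit tangent vector u at p there exist a unit tangent vector v at p with ⟨u,v⟩ > 0 and a parameter t ∈ (0,π) with γ_{p,v}(t) ∈ S; that is, at every point of the sphere the set of unit tangent directions of geodesic arcs leading to points of S is Y-like. -/
open scoped RealInnerProductSpace
open Real

noncomputable section

open Pointwise

/-!
Given a unit vector `q ≠ ±p`, the great circle through `p` and `q` is spanned by `p` and the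
normalized component of `q` orthogonal to `p`; the arc from `p` in that direction reaches `q` at
time `arccos ⟪p, q⟫ ∈ (0, π)`. Choosing `q ∈ S` in the open hemisphere `⟪·, u⟫ > 0`, which exists
because `S` is fine, this direction has the same positive inner product with `u` up to the factor
`1 / sin (arccos ⟪p, q⟫) > 0`.
-/

theorem abs_real_inner_lt_one_of_inner_ne_zero {F : Type*} [NormedAddCommGroup F]
    [InnerProductSpace ℝ F] {p q u : F} (hp : ‖p‖ = 1) (hq : ‖q‖ = 1) (hpu : ⟪p, u⟫ = 0)
    (hqu : ⟪q, u⟫ ≠ 0) : |⟪p, q⟫| < 1 := by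
  refine abs_lt.2 ⟨(neg_one_le_real_inner_of_norm_eq_one hp hq).lt_of_ne' fun h => ?_,
    (real_inner_le_one_of_norm_eq_one hp hq).lt_of_ne fun h => ?_⟩
  · obtain rfl := neg_eq_iff_eq_neg.2 ((inner_eq_neg_one_iff_of_norm_eq_one hp hq).1 h)
    exact hqu (by rw [inner_neg_left, hpu, neg_zero])
  · obtain rfl := (inner_eq_one_iff_of_norm_eq_one hp hq).1 h
    exact hqu hpu

theorem Real.arccos_mem_Ioo_of_abs_lt_one {x : ℝ} (hx : |x| < 1) : arccos x ∈ Set.Ioo 0 π :=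
  ⟨arccos_pos.2 (abs_lt.1 hx).2, arccos_lt_pi.2 (abs_lt.1 hx).1⟩

theorem Real.sin_arccos_pos_of_abs_lt_one {x : ℝ} (hx : |x| < 1) : 0 < sin (arccos x) :=
  sin_pos_of_pos_of_lt_pi (arccos_mem_Ioo_of_abs_lt_one hx).1 (arccos_mem_Ioo_of_abs_lt_one hx).2

theorem norm_sub_real_inner_smul {F : Type*} [NormedAddCommGroup F] [InnerProductSpace ℝ F]
    {p q : F} (hp : ‖p‖ = 1) (hq : ‖q‖ = 1) : ‖q - ⟪p, q⟫ • p‖ = √(1 - ⟪p, q⟫ ^ 2) := by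
  have hc : ⟪p, q⟫ ^ 2 ≤ 1 := by
    have := abs_real_inner_le_norm p q
    rw [hp, hq, one_mul] at this
    exact (sq_le_one_iff_abs_le_one _).2 this
  rw [← sq_eq_sq₀ (norm_nonneg _) (sqrt_nonneg _), sq_sqrt (sub_nonneg.2 hc), norm_sub_sq_real,
    norm_smul, real_inner_smul_right, hp, hq, norm_eq_abs, mul_one, sq_abs, real_inner_comm p q]
  ring

/-- The initial direction of the great-circle arc from `p` to `q`; junk when `q = ±p`. -/
def geoDir (p q : E3) : E3 := (sin (arccos ⟪p, q⟫))⁻¹ • (q - ⟪p, q⟫ • p)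

theorem inner_geoDir_of_inner_eq_zero {p q u : E3} (hup : ⟪u, p⟫ = 0) :
    ⟪u, geoDir p q⟫ = (sin (arccos ⟪p, q⟫))⁻¹ * ⟪u, q⟫ := by
  rw [geoDir, real_inner_smul_right, inner_sub_right, real_inner_smul_right, hup, mul_zero,
    sub_zero]

theorem unitTangent_geoDir {p q : E3} (hp : ‖p‖ = 1) (hq : ‖q‖ = 1) (hpq : |⟪p, q⟫| < 1) :
    UnitTangent p (geoDir p q) := by
  refine ⟨?_, ?_⟩
  · rw [geoDir, norm_smul, norm_sub_real_inner_smul hp hq, ← sin_arccos, norm_inv,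
      norm_of_nonneg (sin_arccos_pos_of_abs_lt_one hpq).le,
      inv_mul_cancel₀ (sin_arccos_pos_of_abs_lt_one hpq).ne']
  · rw [geoDir, real_inner_smul_right, inner_sub_right, real_inner_smul_right,
      real_inner_self_eq_norm_sq, hp]
    ring

theorem geo_geoDir_arccos {p q : E3} (hpq : |⟪p, q⟫| < 1) :
    geo p (geoDir p q) (arccos ⟪p, q⟫) = q := by
  rw [geo, geoDir, smul_smul, mul_inv_cancel₀ (sin_arccos_pos_of_abs_lt_one hpq).ne', one_smul,
    cos_arccos (abs_lt.1 hpq).1.le (abs_lt.1 hpq).2.le]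
  abel

theorem Fine.exists_inner_pos {S : Set E3} (hS : Fine S) {n : E3} (hn : ‖n‖ = 1) :
    ∃ q ∈ S, 0 < ⟪q, n⟫ := by
  have hcard : 0 < {x ∈ S | 0 < ⟪x, n⟫}.ncard := lt_of_lt_of_le (by norm_num) (hS.2.2.2.2 n hn)
  exact Set.nonempty_of_ncard_ne_zero hcard.ne'

/-- For a fine set `S`, at every point of the sphere the set of unit tangent
directions of geodesic arcs leading to points of `S` is Y-like: every open
semicircle of directions contains one. -/
theorem fine_set_directions_ylike (S : Set E3) (hS : Fine S) :
    ∀ p ∈ sphere2, ∀ u : E3, UnitTangent p u →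
      ∃ v : E3, UnitTangent p v ∧ 0 < ⟪u, v⟫ ∧ ∃ t ∈ Set.Ioo (0:ℝ) π, geo p v t ∈ S := by
  rintro p (hp : ‖p‖ = 1) u ⟨hu, hpu⟩
  obtain ⟨q, hqS, hqu⟩ := hS.exists_inner_pos hu
  have hq : ‖q‖ = 1 := hS.2.1 hqS
  have hpq : |⟪p, q⟫| < 1 := abs_real_inner_lt_one_of_inner_ne_zero hp hq hpu hqu.ne'
  refine ⟨geoDir p q, unitTangent_geoDir hp hq hpq, ?_, arccos ⟪p, q⟫,
    arccos_mem_Ioo_of_abs_lt_one hpq, (geo_geoDir_arccos hpq).symm ▸ hqS⟩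
  rw [inner_geoDir_of_inner_eq_zero (real_inner_comm p u ▸ hpu), ← real_inner_comm u q]
  exact mul_pos (inv_pos.2 (sin_arccos_pos_of_abs_lt_one hpq)) hqu
end
end
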